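/- arXiv:2301.07145 — 8 statements merged into one kernel-verified Lean document; each statement's English description precedes it below -/
import Mathlib

section
/- Assume every net in the family has at most 3 elements and that d_w(v) > 0 for every v in C0. Then there exists a proper subset C of C0 with u in C and cut(C)/d_w(C) < cut(C0)/d_w(C0) if and only if there exists an s-t cut of the clique-expansion flow graph G_f whose weight is strictly less than cut(C0)·d_w(C0) (by the max-flow min-cut theorem, this is equivalently the statement of Theorem 3.2 that the maximum s-t flow on G_f is less than cut(C0)·d_w(C0)). -/
/-!
An s-t cut of finite weight puts `u` on the sink side, so it is determined by the set `C ∋ u` of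
nodes of `C0` on that side. Its weight is `d_w(C0)·cut(C) + cut(C0)·d_w(C0 ∖ C)`: the edges from
`s` and from `C0 ∖ C` into `C` carry `d_w(C0)` times the clique-expansion cut of `C`, which is
exactly `cut(C)` because every net has at most three nodes, and the edges into `t` carry
`cut(C0)·d_w(C0 ∖ C)`. As `d_w(C0 ∖ C) = d_w(C0) - d_w(C)`, this weight is below
`cut(C0)·d_w(C0)` iff `cut(C)/d_w(C) < cut(C0)/d_w(C0)`, which fails for `C = C0`.
-/

open scoped ENNReal

namespace Stmt0

/-- Nodes of the flow graph: the elements of `C0` (via `base`), a source `s`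
(with which the contracted node `r` is identified) and a sink `t`. -/
inductive Node (α : Type*) where
  | base : α → Node α
  | s : Node α
  | t : Node α
  deriving DecidableEq

variable {α ι : Type*} [DecidableEq α] [DecidableEq ι]

/-- `cut C` : total weight of the nets containing an element of `C` and an
element of `(C0 ∪ {r}) \ C`. -/
def cut (C0 : Finset α) (r : α) (Nets : Finset ι) (net : ι → Finset α) (w : ι → ℝ)
    (C : Finset α) : ℝ :=
  ∑ i ∈ Nets.filter
      (fun i => (net i ∩ C).Nonempty ∧ (net i ∩ (insert r C0 \ C)).Nonempty), w i

/-- weighted degree `d_w(v)` : total weight of the nets containing `v`. -/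
def dw (Nets : Finset ι) (net : ι → Finset α) (w : ι → ℝ) (v : α) : ℝ :=
  ∑ i ∈ Nets.filter (fun i => v ∈ net i), w i

/-- weighted volume `d_w(C)`. -/
def dwS (Nets : Finset ι) (net : ι → Finset α) (w : ι → ℝ) (C : Finset α) : ℝ :=
  ∑ v ∈ C, dw Nets net w v

/-- Capacities of the clique-expansion flow graph `G_f`. -/
noncomputable def cliqueCap (C0 : Finset α) (r u : α) (Nets : Finset ι)
    (net : ι → Finset α) (w : ι → ℝ) : Node α → Node α → ℝ≥0∞
  | Node.base a, Node.base b =>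
      if a ∈ C0 ∧ b ∈ C0 ∧ a ≠ b then
        ENNReal.ofReal (dwS Nets net w C0 *
          ∑ i ∈ Nets.filter (fun i => a ∈ net i ∧ b ∈ net i),
            w i / (((net i).card : ℝ) - 1))
      else 0
  | Node.s, Node.base b =>
      if b ∈ C0 then
        ENNReal.ofReal (dwS Nets net w C0 *
          ∑ i ∈ Nets.filter (fun i => r ∈ net i ∧ b ∈ net i),
            w i / (((net i).card : ℝ) - 1))
      else 0
  | Node.base a, Node.t =>
      if a ∈ C0 then
        (if a = u then ⊤
         else ENNReal.ofReal (cut C0 r Nets net w C0 * dw Nets net w a))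
      else 0
  | _, _ => 0

/-- The node set of the flow graph: `C0 ∪ {s, t}`. -/
def nodeSet (C0 : Finset α) : Finset (Node α) :=
  C0.image Node.base ∪ {Node.s, Node.t}

open Finset

/-- A net `e` split `p | q` by a cut has `p * q` clique edges across it, each of weight
`w(e) / (|e| - 1)`; for `|e| ≤ 3` these add up to `w(e)` exactly. -/
lemma mul_div_pred_mul_eq_ite {p q : ℕ} (h2 : 2 ≤ p + q) (h3 : p + q ≤ 3) (c : ℝ) :
    p * q / (p + q - 1 : ℝ) * c = if 0 < p ∧ 0 < q then c else 0 := by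
  obtain ⟨hp, hq⟩ : p ≤ 3 ∧ q ≤ 3 := by omega
  interval_cases p <;> interval_cases q <;> first | omega | norm_num

lemma sum_sum_ite_mem_and_mem (X Y e : Finset α) (c : ℝ) :
    ∑ x ∈ X, ∑ y ∈ Y, (if x ∈ e ∧ y ∈ e then c else 0) =
      #(X ∩ e) * #(Y ∩ e) * c := by
  simp only [ite_and, sum_ite_irrel, sum_const_zero, sum_ite_mem, sum_const, nsmul_eq_mul]
  ring

lemma sum_sum_ite_mem_eq_ite_crossing {V C e : Finset α} (he : e ⊆ V) (h2 : 2 ≤ #e)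
    (h3 : #e ≤ 3) (c : ℝ) :
    ∑ x ∈ V \ C, ∑ y ∈ C, (if x ∈ e ∧ y ∈ e then c / (#e - 1) else 0) =
      if (e ∩ C).Nonempty ∧ (e ∩ (V \ C)).Nonempty then c else 0 := by
  have hout : e ∩ (V \ C) = e \ C := by
    rw [← inter_sdiff_assoc, inter_eq_left.2 he]
  have hsplit : #(e ∩ C) + #(e \ C) = #e := card_inter_add_card_sdiff e C
  have hcast : (#e : ℝ) = #(e ∩ C) + #(e \ C) := by exact_mod_cast hsplit.symm
  rw [sum_sum_ite_mem_and_mem, inter_comm (V \ C), inter_comm C, hout, hcast]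
  simp only [← card_pos]
  rw [← mul_div_pred_mul_eq_ite (hsplit ▸ h2) (hsplit ▸ h3)]
  ring

section Hypergraph

variable {ι : Type*} (Nets : Finset ι) (net : ι → Finset α) (w : ι → ℝ)

/-- The clique-expansion capacity `cap(x, y)` divided by `d_w(C0)`. -/
noncomputable def pairWeight (x y : α) : ℝ :=
  ∑ i ∈ Nets.filter (fun i => x ∈ net i ∧ y ∈ net i), w i / (#(net i) - 1)

variable {Nets net w}

lemma dw_nonneg (hw : ∀ i ∈ Nets, 0 < w i) (v : α) : 0 ≤ dw Nets net w v :=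
  sum_nonneg fun i hi => (hw i (mem_filter.1 hi).1).le

lemma dwS_nonneg (hw : ∀ i ∈ Nets, 0 < w i) (C : Finset α) : 0 ≤ dwS Nets net w C :=
  sum_nonneg fun v _ => dw_nonneg hw v

lemma cut_nonneg (C0 : Finset α) (r : α) (hw : ∀ i ∈ Nets, 0 < w i) (C : Finset α) :
    0 ≤ cut C0 r Nets net w C :=
  sum_nonneg fun i hi => (hw i (mem_filter.1 hi).1).le

lemma pairWeight_nonneg (hw : ∀ i ∈ Nets, 0 < w i) (hcard : ∀ i ∈ Nets, 2 ≤ #(net i))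
    (x y : α) : 0 ≤ pairWeight Nets net w x y := by
  refine sum_nonneg fun i hi => ?_
  have hi := (mem_filter.1 hi).1
  have h2 : (2 : ℝ) ≤ #(net i) := by exact_mod_cast hcard i hi
  exact div_nonneg (hw i hi).le (by linarith)

lemma cut_eq_sum_pairWeight {C0 : Finset α} {r : α} (hsub : ∀ i ∈ Nets, net i ⊆ insert r C0)
    (hcard : ∀ i ∈ Nets, 2 ≤ #(net i)) (hsize : ∀ i ∈ Nets, #(net i) ≤ 3) (C : Finset α) :
    cut C0 r Nets net w C = ∑ x ∈ insert r C0 \ C, ∑ y ∈ C, pairWeight Nets net w x y := by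
  calc cut C0 r Nets net w C
      = ∑ i ∈ Nets, if (net i ∩ C).Nonempty ∧ (net i ∩ (insert r C0 \ C)).Nonempty
          then w i else 0 := sum_filter _ _
    _ = ∑ i ∈ Nets, ∑ x ∈ insert r C0 \ C, ∑ y ∈ C,
          (if x ∈ net i ∧ y ∈ net i then w i / (#(net i) - 1) else 0) :=
        sum_congr rfl fun i hi =>
          (sum_sum_ite_mem_eq_ite_crossing (hsub i hi) (hcard i hi) (hsize i hi) (w i)).symm
    _ = _ := by
      simp only [pairWeight, sum_filter]
      rw [sum_comm]
      exact sum_congr rfl fun x _ => sum_comm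

end Hypergraph

def sourceSide (C0 C : Finset α) : Finset (Node α) :=
  insert Node.s ((C0 \ C).image Node.base)

def sinkSide (C : Finset α) : Finset (Node α) := insert Node.t (C.image Node.base)

lemma sourceSide_union_sinkSide {C0 C : Finset α} (hC : C ⊆ C0) :
    sourceSide C0 C ∪ sinkSide C = nodeSet C0 := by
  ext (a | _ | _) <;> simp [sourceSide, sinkSide, nodeSet]
  have := @hC a
  tauto

lemma disjoint_sourceSide_sinkSide (C0 C : Finset α) :
    Disjoint (sourceSide C0 C) (sinkSide C) := by
  rw [disjoint_left]
  rintro (a | _ | _) <;> simp +contextual [sourceSide, sinkSide]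

lemma exists_eq_sides_of_partition {C0 : Finset α} {B1 B2 : Finset (Node α)}
    (hunion : B1 ∪ B2 = nodeSet C0) (hdisj : Disjoint B1 B2) (hs : Node.s ∈ B1)
    (ht : Node.t ∈ B2) : ∃ C ⊆ C0, B1 = sourceSide C0 C ∧ B2 = sinkSide C := by
  have hcover : ∀ x, x ∈ B1 ∨ x ∈ B2 ↔ x ∈ nodeSet C0 := fun x => by
    rw [← mem_union, hunion]
  have hnot : ∀ x ∈ B1, x ∉ B2 := fun _ h => disjoint_left.1 hdisj h
  refine ⟨C0.filter (Node.base · ∈ B2), filter_subset _ _, ?_, ?_⟩ <;> ext x <;>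
    have hcx := hcover x <;> have hnx := hnot x <;>
    cases x <;> simp [sourceSide, sinkSide, nodeSet, hs, ht] at hcx hnx ⊢ <;> tauto

section FlowGraph

variable {ι : Type*} {C0 C : Finset α} {r u a b : α} {Nets : Finset ι} {net : ι → Finset α}
  {w : ι → ℝ}

lemma cliqueCap_s_base (hb : b ∈ C0) :
    cliqueCap C0 r u Nets net w Node.s (Node.base b) =
      ENNReal.ofReal (dwS Nets net w C0 * pairWeight Nets net w r b) := by
  simp [cliqueCap, hb, pairWeight]

lemma cliqueCap_base_t (ha : a ∈ C0) (hau : a ≠ u) :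
    cliqueCap C0 r u Nets net w (Node.base a) Node.t =
      ENNReal.ofReal (cut C0 r Nets net w C0 * dw Nets net w a) := by
  simp [cliqueCap, ha, hau]

lemma cliqueCap_base_base (ha : a ∈ C0) (hb : b ∈ C0) (hab : a ≠ b) :
    cliqueCap C0 r u Nets net w (Node.base a) (Node.base b) =
      ENNReal.ofReal (dwS Nets net w C0 * pairWeight Nets net w a b) := by
  simp [cliqueCap, ha, hb, hab, pairWeight]

lemma sum_cliqueCap_sides_eq_top (hu : u ∈ C0) (huC : u ∉ C) :
    ∑ x ∈ sourceSide C0 C, ∑ y ∈ sinkSide C, cliqueCap C0 r u Nets net w x y = ⊤ :=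
  ENNReal.sum_eq_top.2 ⟨Node.base u, by simp [sourceSide, hu, huC],
    ENNReal.sum_eq_top.2 ⟨Node.t, by simp [sinkSide], by simp [cliqueCap, hu]⟩⟩

lemma sum_cliqueCap_sides (hr : r ∉ C0) (hsub : ∀ i ∈ Nets, net i ⊆ insert r C0)
    (hcard : ∀ i ∈ Nets, 2 ≤ #(net i)) (hsize : ∀ i ∈ Nets, #(net i) ≤ 3)
    (hw : ∀ i ∈ Nets, 0 < w i) (hC : C ⊆ C0) (huC : u ∈ C) :
    ∑ x ∈ sourceSide C0 C, ∑ y ∈ sinkSide C, cliqueCap C0 r u Nets net w x y =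
      ENNReal.ofReal (dwS Nets net w C0 * cut C0 r Nets net w C +
        cut C0 r Nets net w C0 * dwS Nets net w (C0 \ C)) := by
  set D := dwS Nets net w C0
  have hsource : ∀ b, 0 ≤ D * pairWeight Nets net w r b := fun b =>
    mul_nonneg (dwS_nonneg hw C0) (pairWeight_nonneg hw hcard r b)
  have hsink : ∀ a, 0 ≤ cut C0 r Nets net w C0 * dw Nets net w a :=
    fun a => mul_nonneg (cut_nonneg C0 r hw C0) (dw_nonneg hw a)
  have hcross : ∀ a b, 0 ≤ D * pairWeight Nets net w a b := fun a b =>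
    mul_nonneg (dwS_nonneg hw C0) (pairWeight_nonneg hw hcard a b)
  have hrow_nonneg : ∀ a, 0 ≤ cut C0 r Nets net w C0 * dw Nets net w a +
      ∑ b ∈ C, D * pairWeight Nets net w a b := fun a =>
    add_nonneg (hsink a) (sum_nonneg fun b _ => hcross a b)
  have hrow : ∀ a ∈ C0 \ C, cliqueCap C0 r u Nets net w (Node.base a) Node.t +
      ∑ b ∈ C, cliqueCap C0 r u Nets net w (Node.base a) (Node.base b) =
        ENNReal.ofReal (cut C0 r Nets net w C0 * dw Nets net w a +
          ∑ b ∈ C, D * pairWeight Nets net w a b) := fun a ha => by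
    obtain ⟨haC0, haC⟩ := mem_sdiff.1 ha
    rw [cliqueCap_base_t haC0 (ne_of_mem_of_not_mem huC haC).symm,
      sum_congr rfl fun b hb =>
        cliqueCap_base_base haC0 (hC hb) (ne_of_mem_of_not_mem hb haC).symm,
      ENNReal.ofReal_add (hsink a) (sum_nonneg fun b _ => hcross a b),
      ENNReal.ofReal_sum_of_nonneg fun b _ => hcross a b]
  have hinj : ∀ s : Finset α, Set.InjOn Node.base (s : Set α) :=
    fun _ _ _ _ _ h => Node.base.inj h
  have hrC : r ∉ C := fun h => hr (hC h)
  rw [cut_eq_sum_pairWeight hsub hcard hsize, insert_sdiff_of_notMem _ hrC,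
    sum_insert (fun h => hr (mem_sdiff.1 h).1), sourceSide, sum_insert (by simp),
    sum_image (hinj _)]
  simp only [sinkSide, sum_insert (show Node.t ∉ C.image Node.base by simp), sum_image (hinj C)]
  rw [show cliqueCap C0 r u Nets net w Node.s Node.t = 0 from rfl, zero_add,
    sum_congr rfl fun b hb => cliqueCap_s_base (hC hb), sum_congr rfl hrow,
    ← ENNReal.ofReal_sum_of_nonneg fun b _ => hsource b,
    ← ENNReal.ofReal_sum_of_nonneg fun a _ => hrow_nonneg a,
    ← ENNReal.ofReal_add (sum_nonneg fun b _ => hsource b) (sum_nonneg fun a _ => hrow_nonneg a)]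
  simp only [dwS, sum_add_distrib, mul_add, mul_sum]
  congr 1
  ring

end FlowGraph

lemma add_mul_lt_mul_iff_div_lt_div {D d d' c c0 : ℝ} (hD : 0 < D) (hd : 0 < d)
    (hsplit : d' + d = D) : D * c + c0 * d' < c0 * D ↔ c / d < c0 / D := by
  rw [div_lt_div_iff₀ hd hD, ← hsplit]
  constructor <;> intro h <;> linarith

/-- There is a proper subset `C ⊂ C0` containing the seed node `u` with
`cut(C)/d_w(C) < cut(C0)/d_w(C0)` iff there is an s-t cut of the
clique-expansion flow graph of weight strictly less than `cut(C0)·d_w(C0)`. -/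
theorem clique_expansion_maxflow_iff
    (C0 : Finset α) (u r : α) (hu : u ∈ C0) (hr : r ∉ C0)
    (Nets : Finset ι) (net : ι → Finset α) (w : ι → ℝ)
    (hsub : ∀ i ∈ Nets, net i ⊆ insert r C0)
    (hcard : ∀ i ∈ Nets, 2 ≤ (net i).card)
    (hsize : ∀ i ∈ Nets, (net i).card ≤ 3)
    (hw : ∀ i ∈ Nets, 0 < w i)
    (hdw : ∀ v ∈ C0, 0 < dw Nets net w v) :
    (∃ C : Finset α, C ⊂ C0 ∧ u ∈ C ∧
        cut C0 r Nets net w C / dwS Nets net w C <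
          cut C0 r Nets net w C0 / dwS Nets net w C0) ↔
    (∃ B1 B2 : Finset (Node α),
        B1 ∪ B2 = nodeSet C0 ∧ Disjoint B1 B2 ∧
        Node.s ∈ B1 ∧ Node.t ∈ B2 ∧
        (∑ x ∈ B1, ∑ y ∈ B2, cliqueCap C0 r u Nets net w x y) <
          ENNReal.ofReal (cut C0 r Nets net w C0 * dwS Nets net w C0)) := by
  have hvol : ∀ C ⊆ C0, u ∈ C → 0 < dwS Nets net w C := fun C hC huC =>
    sum_pos (fun v hv => hdw v (hC hv)) ⟨u, huC⟩
  have hweight : ∀ C ⊆ C0, u ∈ C →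
      ((∑ x ∈ sourceSide C0 C, ∑ y ∈ sinkSide C, cliqueCap C0 r u Nets net w x y) <
          ENNReal.ofReal (cut C0 r Nets net w C0 * dwS Nets net w C0) ↔
        cut C0 r Nets net w C / dwS Nets net w C <
          cut C0 r Nets net w C0 / dwS Nets net w C0) := fun C hC huC => by
    rw [sum_cliqueCap_sides hr hsub hcard hsize hw hC huC,
      ENNReal.ofReal_lt_ofReal_iff_of_nonneg (add_nonneg
        (mul_nonneg (dwS_nonneg hw C0) (cut_nonneg C0 r hw C))
        (mul_nonneg (cut_nonneg C0 r hw C0) (dwS_nonneg hw _)))]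
    exact add_mul_lt_mul_iff_div_lt_div (hvol C0 subset_rfl hu) (hvol C hC huC) (sum_sdiff hC)
  constructor
  · rintro ⟨C, hCC0, huC, hlt⟩
    exact ⟨_, _, sourceSide_union_sinkSide hCC0.subset, disjoint_sourceSide_sinkSide C0 C,
      mem_insert_self _ _, mem_insert_self _ _, (hweight C hCC0.subset huC).2 hlt⟩
  · rintro ⟨B1, B2, hunion, hdisj, hs, ht, hlt⟩
    obtain ⟨C, hC, rfl, rfl⟩ := exists_eq_sides_of_partition hunion hdisj hs ht
    have huC : u ∈ C := by
      by_contra huC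
      exact not_top_lt (sum_cliqueCap_sides_eq_top hu huC ▸ hlt)
    have hlt := (hweight C hC huC).1 hlt
    refine ⟨C, hC.ssubset_of_ne ?_, huC, hlt⟩
    rintro rfl
    exact lt_irrefl _ hlt

end Stmt0
end

section
/- Assume every net in the family has at most 3 elements and that d_w(v) > 0 for every v in C0. Then the map C ↦ (B1,B2) with B2 = C ∪ {t} and B1 = (C0 ∖ C) ∪ {s} is a bijection from the collection of proper subsets C of C0 with u ∈ C and cut(C)/d_w(C) < cut(C0)/d_w(C0) onto the collection of s-t cuts of the clique-expansion flow graph G_f whose weight is strictly less than cut(C0)·d_w(C0). -/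
open scoped ENNReal

namespace Stmt1

/-- Nodes of the flow graph: the elements of `C0` (via `base`), a source `s`
(with which the contracted node `r` is identified) and a sink `t`. -/
inductive Node (α : Type*) where
  | base : α → Node α
  | s : Node α
  | t : Node α
  deriving DecidableEq

variable {α ι : Type*} [DecidableEq α] [DecidableEq ι]

/-- `cut C` : total weight of the nets containing an element of `C` and an
element of `(C0 ∪ {r}) \ C`. -/
def cut (C0 : Finset α) (r : α) (Nets : Finset ι) (net : ι → Finset α) (w : ι → ℝ)
    (C : Finset α) : ℝ :=
  ∑ i ∈ Nets.filter
      (fun i => (net i ∩ C).Nonempty ∧ (net i ∩ (insert r C0 \ C)).Nonempty), w i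

/-- weighted degree `d_w(v)` : total weight of the nets containing `v`. -/
def dw (Nets : Finset ι) (net : ι → Finset α) (w : ι → ℝ) (v : α) : ℝ :=
  ∑ i ∈ Nets.filter (fun i => v ∈ net i), w i

/-- weighted volume `d_w(C)`. -/
def dwS (Nets : Finset ι) (net : ι → Finset α) (w : ι → ℝ) (C : Finset α) : ℝ :=
  ∑ v ∈ C, dw Nets net w v

/-- Capacities of the clique-expansion flow graph `G_f`. -/
noncomputable def cliqueCap (C0 : Finset α) (r u : α) (Nets : Finset ι)
    (net : ι → Finset α) (w : ι → ℝ) : Node α → Node α → ℝ≥0∞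
  | Node.base a, Node.base b =>
      if a ∈ C0 ∧ b ∈ C0 ∧ a ≠ b then
        ENNReal.ofReal (dwS Nets net w C0 *
          ∑ i ∈ Nets.filter (fun i => a ∈ net i ∧ b ∈ net i),
            w i / (((net i).card : ℝ) - 1))
      else 0
  | Node.s, Node.base b =>
      if b ∈ C0 then
        ENNReal.ofReal (dwS Nets net w C0 *
          ∑ i ∈ Nets.filter (fun i => r ∈ net i ∧ b ∈ net i),
            w i / (((net i).card : ℝ) - 1))
      else 0
  | Node.base a, Node.t =>
      if a ∈ C0 then
        (if a = u then ⊤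
         else ENNReal.ofReal (cut C0 r Nets net w C0 * dw Nets net w a))
      else 0
  | _, _ => 0

/-- The node set of the flow graph: `C0 ∪ {s, t}`. -/
def nodeSet (C0 : Finset α) : Finset (Node α) :=
  C0.image Node.base ∪ {Node.s, Node.t}

/-! For `C ⊆ C0` with `u ∈ C`, the s-t cut `((C0 ∖ C) ∪ {s}, C ∪ {t})` crosses the clique edges
between `(C0 ∪ {r}) ∖ C` and `C` (with `r = s`) and the sink edges out of `C0 ∖ C`. A net `e` puts
weight `w(e)/(|e| - 1)` on each of its `|e ∖ C| · |e ∩ C|` crossing pairs, and when `|e| ≤ 3` this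
product is `|e| - 1` if `C` splits `e` and `0` otherwise; so the clique edges contribute exactly
`d_w(C0) · cut(C)`, and the sink edges `cut(C0) · (d_w(C0) - d_w(C))`. The cut therefore weighs less
than `cut(C0) · d_w(C0)` iff `cut(C)/d_w(C) < cut(C0)/d_w(C0)`. Conversely every s-t cut comes from
`C = B2 ∩ C0`, and `u ∉ C` would cut the infinite edge `u → t`. -/

section CutWeight

omit [DecidableEq ι]

theorem mul_eq_add_sub_one_of_add_le_three {a b : ℕ} (ha : 1 ≤ a) (hb : 1 ≤ b)
    (h : a + b ≤ 3) : a * b = a + b - 1 := by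
  have : a ≤ 2 := by omega
  interval_cases a <;> omega

/-- This is where nets of size at most three are needed: a 2–2 split of a 4-set has 4 ≠ 3
crossing pairs. -/
theorem card_sdiff_mul_card_inter_div (e C : Finset α) (he : e.card ≤ 3) :
    ((e \ C).card * (e ∩ C).card : ℝ) / (e.card - 1) =
      if (e ∩ C).Nonempty ∧ (e \ C).Nonempty then 1 else 0 := by
  have hsplit := Finset.card_sdiff_add_card_inter e C
  split_ifs with h
  · obtain ⟨hin, hout⟩ := h
    have hin := Finset.card_pos.2 hin
    have hout := Finset.card_pos.2 hout
    have hmul := mul_eq_add_sub_one_of_add_le_three hout hin (hsplit ▸ he)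
    rw [hsplit] at hmul
    have h2 : (2 : ℝ) ≤ e.card := by exact_mod_cast (show 2 ≤ e.card by omega)
    rw [← Nat.cast_mul, hmul, Nat.cast_sub (by omega), Nat.cast_one, div_self (by linarith)]
  · rw [not_and_or, Finset.not_nonempty_iff_eq_empty, Finset.not_nonempty_iff_eq_empty] at h
    rcases h with h | h <;> simp [h]

theorem sum_sum_sum_filter_mem_mem {β : Type*} [AddCommMonoid β] (Nets : Finset ι)
    (net : ι → Finset α) (f : ι → β) (A C : Finset α) :
    ∑ x ∈ A, ∑ y ∈ C, ∑ i ∈ Nets.filter (fun i => x ∈ net i ∧ y ∈ net i), f i =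
      ∑ i ∈ Nets, ((net i ∩ A).card * (net i ∩ C).card) • f i := by
  simp only [Finset.sum_filter]
  rw [Finset.sum_congr rfl fun x _ => Finset.sum_comm, Finset.sum_comm]
  refine Finset.sum_congr rfl fun i _ => ?_
  simp [ite_and, Finset.sum_ite_mem, Finset.inter_comm, mul_smul]

theorem ofReal_add_mul_sub_lt_ofReal_mul_iff {c d K D : ℝ} (hc : 0 ≤ c) (hK : 0 ≤ K)
    (hd : 0 < d) (hdD : d ≤ D) :
    ENNReal.ofReal (D * c + K * (D - d)) < ENNReal.ofReal (K * D) ↔ c / d < K / D := by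
  have hD : 0 < D := hd.trans_le hdD
  rw [ENNReal.ofReal_lt_ofReal_iff_of_nonneg (by nlinarith), div_lt_div_iff₀ hd hD]
  constructor <;> intro h <;> linarith

def stCut (C0 C : Finset α) : Finset (Node α) × Finset (Node α) :=
  ((C0 \ C).image Node.base ∪ {Node.s}, C.image Node.base ∪ {Node.t})

theorem base_mem_nodeSet {C0 : Finset α} {a : α} : Node.base a ∈ nodeSet C0 ↔ a ∈ C0 := by
  simp [nodeSet]

theorem stCut_injective (C0 : Finset α) : Function.Injective (stCut C0) := by
  intro C C' h
  ext a
  simpa [stCut] using congrArg (Node.base a ∈ ·.2) h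

theorem stCut_isPartition {C0 C : Finset α} (hC : C ⊆ C0) :
    (stCut C0 C).1 ∪ (stCut C0 C).2 = nodeSet C0 ∧ Disjoint (stCut C0 C).1 (stCut C0 C).2 ∧
      Node.s ∈ (stCut C0 C).1 ∧ Node.t ∈ (stCut C0 C).2 := by
  refine ⟨?_, ?_, by simp [stCut], by simp [stCut]⟩
  · ext (a | _ | _) <;> simp [stCut, nodeSet]
    have := @hC a
    tauto
  · rw [Finset.disjoint_left]
    rintro (a | _ | _) <;> simp [stCut]

theorem exists_stCut_eq {C0 : Finset α} {p : Finset (Node α) × Finset (Node α)}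
    (hunion : p.1 ∪ p.2 = nodeSet C0) (hdisj : Disjoint p.1 p.2) (hs : Node.s ∈ p.1)
    (ht : Node.t ∈ p.2) : ∃ C ⊆ C0, stCut C0 C = p := by
  obtain ⟨B1, B2⟩ := p
  have hsep : ∀ x ∈ B1, x ∉ B2 := fun _ h => Finset.disjoint_left.1 hdisj h
  have hbase (a : α) : Node.base a ∈ B1 ∨ Node.base a ∈ B2 ↔ a ∈ C0 := by
    rw [← Finset.mem_union, hunion, base_mem_nodeSet]
  refine ⟨C0.filter (Node.base · ∈ B2), Finset.filter_subset _ _, Prod.ext ?_ ?_⟩ <;>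
    ext (a | _ | _) <;> simp [stCut]
  · have := hbase a; have := hsep (.base a); tauto
  · exact hs
  · exact fun h => hsep _ h ht
  · exact fun h => (hbase a).1 (.inr h)
  · exact hsep _ hs
  · exact ht

variable {C0 : Finset α} {r u : α} {Nets : Finset ι} {net : ι → Finset α} {w : ι → ℝ}

/-- `cliqueCap` between two nodes, without its factor `d_w(C0)`. -/
noncomputable def cliqueWeight (Nets : Finset ι) (net : ι → Finset α) (w : ι → ℝ) (x y : α) : ℝ :=
  ∑ i ∈ Nets.filter (fun i => x ∈ net i ∧ y ∈ net i), w i / ((net i).card - 1)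

theorem dw_nonneg (hw : ∀ i ∈ Nets, 0 < w i) (v : α) : 0 ≤ dw Nets net w v :=
  Finset.sum_nonneg fun i hi => (hw i (Finset.mem_filter.1 hi).1).le

theorem dwS_nonneg (hw : ∀ i ∈ Nets, 0 < w i) (C : Finset α) : 0 ≤ dwS Nets net w C :=
  Finset.sum_nonneg fun v _ => dw_nonneg hw v

theorem cut_nonneg (hw : ∀ i ∈ Nets, 0 < w i) (C : Finset α) : 0 ≤ cut C0 r Nets net w C :=
  Finset.sum_nonneg fun i hi => (hw i (Finset.mem_filter.1 hi).1).le

theorem cliqueWeight_nonneg (hw : ∀ i ∈ Nets, 0 < w i) {x y : α} (hxy : x ≠ y) :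
    0 ≤ cliqueWeight Nets net w x y := by
  refine Finset.sum_nonneg fun i hi => ?_
  obtain ⟨hi, hx, hy⟩ := Finset.mem_filter.1 hi
  have : (1 : ℝ) < (net i).card := by exact_mod_cast Finset.one_lt_card.2 ⟨x, hx, y, hy, hxy⟩
  exact div_nonneg (hw i hi).le (by linarith)

theorem cut_eq_sum_sum_cliqueWeight (hsub : ∀ i ∈ Nets, net i ⊆ insert r C0)
    (hsize : ∀ i ∈ Nets, (net i).card ≤ 3) (C : Finset α) :
    cut C0 r Nets net w C = ∑ x ∈ insert r C0 \ C, ∑ y ∈ C, cliqueWeight Nets net w x y := by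
  rw [cut, Finset.sum_filter]
  simp only [cliqueWeight, sum_sum_sum_filter_mem_mem]
  refine Finset.sum_congr rfl fun i hi => ?_
  rw [← Finset.inter_sdiff_assoc, Finset.inter_eq_left.2 (hsub i hi), nsmul_eq_mul,
    Nat.cast_mul, show ∀ a b c d : ℝ, a * b * (d / c) = d * (a * b / c) by intros; ring,
    card_sdiff_mul_card_inter_div _ _ (hsize i hi)]
  split_ifs <;> simp

theorem cliqueCap_base_base {x y : α} (hx : x ∈ C0) (hy : y ∈ C0) (hxy : x ≠ y) :
    cliqueCap C0 r u Nets net w (Node.base x) (Node.base y) =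
      ENNReal.ofReal (dwS Nets net w C0 * cliqueWeight Nets net w x y) := by
  simp [cliqueCap, cliqueWeight, hx, hy, hxy]

theorem cliqueCap_s_base {y : α} (hy : y ∈ C0) :
    cliqueCap C0 r u Nets net w Node.s (Node.base y) =
      ENNReal.ofReal (dwS Nets net w C0 * cliqueWeight Nets net w r y) := by
  simp [cliqueCap, cliqueWeight, hy]

theorem cliqueCap_base_t {x : α} (hx : x ∈ C0) (hxu : x ≠ u) :
    cliqueCap C0 r u Nets net w (Node.base x) Node.t =
      ENNReal.ofReal (cut C0 r Nets net w C0 * dw Nets net w x) := by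
  simp [cliqueCap, hx, hxu]

theorem sum_sum_cliqueCap_stCut_eq_top {C : Finset α} (hu : u ∈ C0) (huC : u ∉ C) :
    ∑ x ∈ (stCut C0 C).1, ∑ y ∈ (stCut C0 C).2, cliqueCap C0 r u Nets net w x y = ⊤ :=
  ENNReal.sum_eq_top.2 ⟨.base u, by simp [stCut, hu, huC],
    ENNReal.sum_eq_top.2 ⟨.t, by simp [stCut], by simp [cliqueCap, hu]⟩⟩

theorem sum_sum_cliqueCap_stCut_eq_sum {C : Finset α} (hr : r ∉ C0) (hC : C ⊆ C0)
    (huC : u ∈ C) :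
    ∑ x ∈ (stCut C0 C).1, ∑ y ∈ (stCut C0 C).2, cliqueCap C0 r u Nets net w x y =
      ∑ x ∈ insert r C0 \ C, ∑ y ∈ C,
          ENNReal.ofReal (dwS Nets net w C0 * cliqueWeight Nets net w x y) +
        ∑ x ∈ C0 \ C, ENNReal.ofReal (cut C0 r Nets net w C0 * dw Nets net w x) := by
  have hrC : r ∉ C := fun h => hr (hC h)
  have hinj : Set.InjOn (Node.base : α → Node α) ↑(C0 \ C) := fun _ _ _ _ h => Node.base.inj h
  have hinj' : Set.InjOn (Node.base : α → Node α) ↑C := fun _ _ _ _ h => Node.base.inj h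
  have hst : cliqueCap C0 r u Nets net w Node.s Node.t = 0 := rfl
  have hbb : ∀ x ∈ C0 \ C, ∑ y ∈ C, cliqueCap C0 r u Nets net w (Node.base x) (Node.base y) =
      ∑ y ∈ C, ENNReal.ofReal (dwS Nets net w C0 * cliqueWeight Nets net w x y) :=
    fun x hx => Finset.sum_congr rfl fun y hy => cliqueCap_base_base (Finset.mem_sdiff.1 hx).1
      (hC hy) fun h => (Finset.mem_sdiff.1 hx).2 (h ▸ hy)
  rw [Finset.insert_sdiff_of_notMem _ hrC, Finset.sum_insert fun h => hr (Finset.sdiff_subset h),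
    stCut, Finset.sum_union (by simp), Finset.sum_image hinj, Finset.sum_singleton]
  simp only [Finset.sum_union (show Disjoint (C.image Node.base) {Node.t} by simp),
    Finset.sum_image hinj', Finset.sum_singleton]
  rw [Finset.sum_add_distrib, Finset.sum_congr rfl hbb,
    Finset.sum_congr rfl fun x hx => cliqueCap_base_t (Finset.mem_sdiff.1 hx).1
      fun h => (Finset.mem_sdiff.1 hx).2 (h ▸ huC),
    Finset.sum_congr rfl fun y hy => cliqueCap_s_base (hC hy), hst, add_zero]
  ring

theorem sum_sum_cliqueCap_stCut {C : Finset α} (hr : r ∉ C0)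
    (hsub : ∀ i ∈ Nets, net i ⊆ insert r C0) (hsize : ∀ i ∈ Nets, (net i).card ≤ 3)
    (hw : ∀ i ∈ Nets, 0 < w i) (hC : C ⊆ C0) (huC : u ∈ C) :
    ∑ x ∈ (stCut C0 C).1, ∑ y ∈ (stCut C0 C).2, cliqueCap C0 r u Nets net w x y =
      ENNReal.ofReal (dwS Nets net w C0 * cut C0 r Nets net w C +
        cut C0 r Nets net w C0 * (dwS Nets net w C0 - dwS Nets net w C)) := by
  have hsdiff : dwS Nets net w (C0 \ C) = dwS Nets net w C0 - dwS Nets net w C :=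
    Finset.sum_sdiff_eq_sub hC
  set D0 := dwS Nets net w C0
  set K0 := cut C0 r Nets net w C0
  have hD0 : 0 ≤ D0 := dwS_nonneg hw C0
  have hcross : ∀ x ∈ insert r C0 \ C, ∀ y ∈ C, 0 ≤ D0 * cliqueWeight Nets net w x y :=
    fun x hx y hy => mul_nonneg hD0
      (cliqueWeight_nonneg hw fun h => (Finset.mem_sdiff.1 hx).2 (h ▸ hy))
  have hsink : ∀ x ∈ C0 \ C, 0 ≤ K0 * dw Nets net w x :=
    fun x _ => mul_nonneg (cut_nonneg hw C0) (dw_nonneg hw x)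
  rw [sum_sum_cliqueCap_stCut_eq_sum hr hC huC, ← hsdiff,
    ENNReal.ofReal_add (mul_nonneg hD0 (cut_nonneg hw C))
      (mul_nonneg (cut_nonneg hw C0) (dwS_nonneg hw _))]
  congr 1
  · rw [cut_eq_sum_sum_cliqueWeight hsub hsize, Finset.mul_sum, ENNReal.ofReal_sum_of_nonneg
      fun x hx => by rw [Finset.mul_sum]; exact Finset.sum_nonneg (hcross x hx)]
    refine Finset.sum_congr rfl fun x hx => ?_
    rw [Finset.mul_sum, ENNReal.ofReal_sum_of_nonneg (hcross x hx)]
  · rw [dwS, Finset.mul_sum, ENNReal.ofReal_sum_of_nonneg hsink]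

theorem sum_sum_cliqueCap_stCut_lt_iff {C : Finset α} (hr : r ∉ C0)
    (hsub : ∀ i ∈ Nets, net i ⊆ insert r C0) (hsize : ∀ i ∈ Nets, (net i).card ≤ 3)
    (hw : ∀ i ∈ Nets, 0 < w i) (hu : 0 < dw Nets net w u) (hC : C ⊆ C0) (huC : u ∈ C) :
    ∑ x ∈ (stCut C0 C).1, ∑ y ∈ (stCut C0 C).2, cliqueCap C0 r u Nets net w x y <
        ENNReal.ofReal (cut C0 r Nets net w C0 * dwS Nets net w C0) ↔
      cut C0 r Nets net w C / dwS Nets net w C < cut C0 r Nets net w C0 / dwS Nets net w C0 := by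
  rw [sum_sum_cliqueCap_stCut hr hsub hsize hw hC huC]
  exact ofReal_add_mul_sub_lt_ofReal_mul_iff (cut_nonneg hw C) (cut_nonneg hw C0)
    (Finset.sum_pos' (fun v _ => dw_nonneg hw v) ⟨u, huC, hu⟩)
    (Finset.sum_le_sum_of_subset_of_nonneg hC fun v _ _ => dw_nonneg hw v)

end CutWeight

theorem clique_expansion_cut_bijection_general
    (C0 : Finset α) (u r : α) (hu : u ∈ C0) (hr : r ∉ C0)
    (Nets : Finset ι) (net : ι → Finset α) (w : ι → ℝ)
    (hsub : ∀ i ∈ Nets, net i ⊆ insert r C0)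
    (hsize : ∀ i ∈ Nets, (net i).card ≤ 3)
    (hw : ∀ i ∈ Nets, 0 < w i)
    (hdw : ∀ v ∈ C0, 0 < dw Nets net w v) :
    Set.BijOn
      (fun C : Finset α =>
        (((C0 \ C).image Node.base ∪ {Node.s} : Finset (Node α)),
         (C.image Node.base ∪ {Node.t} : Finset (Node α))))
      {C : Finset α | C ⊂ C0 ∧ u ∈ C ∧
        cut C0 r Nets net w C / dwS Nets net w C <
          cut C0 r Nets net w C0 / dwS Nets net w C0}
      {p : Finset (Node α) × Finset (Node α) |
        p.1 ∪ p.2 = nodeSet C0 ∧ Disjoint p.1 p.2 ∧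
        Node.s ∈ p.1 ∧ Node.t ∈ p.2 ∧
        (∑ x ∈ p.1, ∑ y ∈ p.2, cliqueCap C0 r u Nets net w x y) <
          ENNReal.ofReal (cut C0 r Nets net w C0 * dwS Nets net w C0)} := by
  change Set.BijOn (stCut C0) _ _
  have hweight C (hC : C ⊆ C0) (huC : u ∈ C) :=
    sum_sum_cliqueCap_stCut_lt_iff hr hsub hsize hw (hdw u hu) hC huC
  refine ⟨fun C ⟨hC, huC, hlt⟩ => ?_, (stCut_injective C0).injOn, ?_⟩
  · obtain ⟨hunion, hdisj, hs, ht⟩ := stCut_isPartition hC.subset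
    exact ⟨hunion, hdisj, hs, ht, (hweight C hC.subset huC).2 hlt⟩
  rintro p ⟨hunion, hdisj, hs, ht, hlt⟩
  obtain ⟨C, hC, rfl⟩ := exists_stCut_eq hunion hdisj hs ht
  have huC : u ∈ C := by
    by_contra huC
    rw [sum_sum_cliqueCap_stCut_eq_top hu huC] at hlt
    exact not_top_lt hlt
  have hratio := (hweight C hC huC).1 hlt
  refine ⟨C, ⟨hC.ssubset_of_ne ?_, huC, hratio⟩, rfl⟩
  rintro rfl
  exact lt_irrefl _ hratio

/-- The map `C ↦ (B1, B2)` with `B2 = C ∪ {t}` and `B1 = (C0 \\ C) ∪ {s}` is a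
bijection from the proper subsets `C ⊂ C0` with `u ∈ C` and
`cut(C)/d_w(C) < cut(C0)/d_w(C0)` onto the s-t cuts of the clique-expansion
flow graph of weight strictly less than `cut(C0)·d_w(C0)`. -/
theorem clique_expansion_cut_bijection
    (C0 : Finset α) (u r : α) (hu : u ∈ C0) (hr : r ∉ C0)
    (Nets : Finset ι) (net : ι → Finset α) (w : ι → ℝ)
    (hsub : ∀ i ∈ Nets, net i ⊆ insert r C0)
    (hcard : ∀ i ∈ Nets, 2 ≤ (net i).card)
    (hsize : ∀ i ∈ Nets, (net i).card ≤ 3)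
    (hw : ∀ i ∈ Nets, 0 < w i)
    (hdw : ∀ v ∈ C0, 0 < dw Nets net w v) :
    Set.BijOn
      (fun C : Finset α =>
        (((C0 \ C).image Node.base ∪ {Node.s} : Finset (Node α)),
         (C.image Node.base ∪ {Node.t} : Finset (Node α))))
      {C : Finset α | C ⊂ C0 ∧ u ∈ C ∧
        cut C0 r Nets net w C / dwS Nets net w C <
          cut C0 r Nets net w C0 / dwS Nets net w C0}
      {p : Finset (Node α) × Finset (Node α) |
        p.1 ∪ p.2 = nodeSet C0 ∧ Disjoint p.1 p.2 ∧
        Node.s ∈ p.1 ∧ Node.t ∈ p.2 ∧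
        (∑ x ∈ p.1, ∑ y ∈ p.2, cliqueCap C0 r u Nets net w x y) <
          ENNReal.ofReal (cut C0 r Nets net w C0 * dwS Nets net w C0)} :=
  clique_expansion_cut_bijection_general C0 u r hu hr Nets net w hsub hsize hw hdw

end Stmt1
end

section
/- Assume d_w(v) > 0 for every v in C0 (no restriction on net sizes). Then there exists a proper subset C of C0 with u in C and cut(C)/d_w(C) < cut(C0)/d_w(C0) if and only if there exists an s-t cut of the Lawler-expansion flow graph whose weight is strictly less than cut(C0)·d_w(C0). -/
open scoped ENNReal

namespace Stmt2

/-- Nodes of the Lawler-expansion flow graph: the elements of `C0` (via `base`),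
two auxiliary nodes `eminus i`, `eplus i` for each net `i`, a source `s`
(with which the contracted node `r` is identified) and a sink `t`. -/
inductive LNode (α ι : Type*) where
  | base : α → LNode α ι
  | eminus : ι → LNode α ι
  | eplus : ι → LNode α ι
  | s : LNode α ι
  | t : LNode α ι
  deriving DecidableEq

variable {α ι : Type*} [DecidableEq α] [DecidableEq ι]

/-- `cut C` : total weight of the nets containing an element of `C` and an
element of `(C0 ∪ {r}) \ C`. -/
def cut (C0 : Finset α) (r : α) (Nets : Finset ι) (net : ι → Finset α) (w : ι → ℝ)
    (C : Finset α) : ℝ :=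
  ∑ i ∈ Nets.filter
      (fun i => (net i ∩ C).Nonempty ∧ (net i ∩ (insert r C0 \ C)).Nonempty), w i

/-- weighted degree `d_w(v)` : total weight of the nets containing `v`. -/
def dw (Nets : Finset ι) (net : ι → Finset α) (w : ι → ℝ) (v : α) : ℝ :=
  ∑ i ∈ Nets.filter (fun i => v ∈ net i), w i

/-- weighted volume `d_w(C)`. -/
def dwS (Nets : Finset ι) (net : ι → Finset α) (w : ι → ℝ) (C : Finset α) : ℝ :=
  ∑ v ∈ C, dw Nets net w v

/-- Capacities of the Lawler-expansion flow graph. -/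
noncomputable def lawlerCap (C0 : Finset α) (r u : α) (Nets : Finset ι)
    (net : ι → Finset α) (w : ι → ℝ) : LNode α ι → LNode α ι → ℝ≥0∞
  | LNode.eminus i, LNode.eplus j =>
      if i = j ∧ i ∈ Nets then ENNReal.ofReal (dwS Nets net w C0 * w i) else 0
  | LNode.base x, LNode.eminus i =>
      if i ∈ Nets ∧ x ∈ net i ∧ x ∈ C0 then ⊤ else 0
  | LNode.s, LNode.eminus i =>
      if i ∈ Nets ∧ r ∈ net i then ⊤ else 0
  | LNode.eplus i, LNode.base x =>
      if i ∈ Nets ∧ x ∈ net i ∧ x ∈ C0 then ⊤ else 0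
  | LNode.base v, LNode.t =>
      if v ∈ C0 then
        (if v = u then ⊤
         else ENNReal.ofReal (cut C0 r Nets net w C0 * dw Nets net w v))
      else 0
  | _, _ => 0

/-- The node set of the Lawler-expansion flow graph:
`C0 ∪ {s, t} ∪ {e⁻, e⁺ : e ∈ 𝓔}`. -/
def nodeSet (C0 : Finset α) (Nets : Finset ι) : Finset (LNode α ι) :=
  C0.image LNode.base ∪ Nets.image LNode.eminus ∪ Nets.image LNode.eplus ∪
    {LNode.s, LNode.t}

end Stmt2

/-!
For `u ∈ C ⊆ C0`, cutting the nets that cross `C` at their edges `e⁻ → e⁺` and the nodes of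
`C0 \ C` at their edges to `t` is an s-t cut of weight
`d_w(C0)·cut(C) + cut(C0)·(d_w(C0) - d_w(C))`, which is below `cut(C0)·d_w(C0)` exactly when
`cut(C)/d_w(C) < cut(C0)/d_w(C0)`. Conversely, an s-t cut of finite weight cuts no edge of
infinite capacity; hence, with `C` the nodes of `C0` on the sink side, `u ∈ C` and all the edges
just listed go across the cut, so its weight is at least the same quantity. For `C = C0` that
quantity is `cut(C0)·d_w(C0)` itself, so a strictly lighter cut gives a proper subset.
-/

namespace Stmt2

variable {α ι : Type*} [DecidableEq α]

section Volumes

variable (Nets : Finset ι) (net : ι → Finset α) (w : ι → ℝ)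

lemma cut_nonneg (C0 : Finset α) (r : α) (hw : ∀ i ∈ Nets, 0 ≤ w i) (C : Finset α) :
    0 ≤ cut C0 r Nets net w C :=
  Finset.sum_nonneg fun i hi => hw i (Finset.mem_filter.1 hi).1

lemma dw_nonneg (hw : ∀ i ∈ Nets, 0 ≤ w i) (v : α) : 0 ≤ dw Nets net w v :=
  Finset.sum_nonneg fun i hi => hw i (Finset.mem_filter.1 hi).1

lemma dwS_nonneg (hw : ∀ i ∈ Nets, 0 ≤ w i) (C : Finset α) : 0 ≤ dwS Nets net w C :=
  Finset.sum_nonneg fun v _ => dw_nonneg Nets net w hw v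

lemma dwS_mono (hw : ∀ i ∈ Nets, 0 ≤ w i) {C C' : Finset α} (h : C ⊆ C') :
    dwS Nets net w C ≤ dwS Nets net w C' :=
  Finset.sum_le_sum_of_subset_of_nonneg h fun v _ _ => dw_nonneg Nets net w hw v

lemma dwS_pos (hw : ∀ i ∈ Nets, 0 ≤ w i) {u : α} (hdw : 0 < dw Nets net w u) {C : Finset α}
    (hu : u ∈ C) : 0 < dwS Nets net w C :=
  hdw.trans_le (Finset.single_le_sum (fun v _ => dw_nonneg Nets net w hw v) hu)

end Volumes

lemma ofReal_lt_ofReal_iff_div_lt_div {c d K D : ℝ} (hc : 0 ≤ c) (hK : 0 ≤ K) (hd : 0 < d)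
    (hdD : d ≤ D) :
    ENNReal.ofReal (D * c + K * (D - d)) < ENNReal.ofReal (K * D) ↔ c / d < K / D := by
  rw [ENNReal.ofReal_lt_ofReal_iff_of_nonneg
      (add_nonneg (mul_nonneg (hd.le.trans hdD) hc) (mul_nonneg hK (sub_nonneg.2 hdD))),
    div_lt_div_iff₀ hd (hd.trans_le hdD)]
  constructor <;> intro h <;> linarith

variable [DecidableEq ι] (C0 : Finset α) (r u : α) (Nets : Finset ι) (net : ι → Finset α)
  (w : ι → ℝ)

def crossingNets (C : Finset α) : Finset ι :=
  Nets.filter fun i => (net i ∩ C).Nonempty ∧ (net i ∩ (insert r C0 \ C)).Nonempty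

def crossingEdges (C : Finset α) : Finset (LNode α ι × LNode α ι) :=
  (crossingNets C0 r Nets net C).image (fun i => (LNode.eminus i, LNode.eplus i)) ∪
    (C0 \ C).image (fun v => (LNode.base v, LNode.t))

def sinkSide (C : Finset α) : Finset (LNode α ι) :=
  C.image LNode.base ∪ (Nets.filter fun i => (net i ∩ C).Nonempty).image LNode.eplus ∪
    (Nets.filter fun i => ¬(net i ∩ (insert r C0 \ C)).Nonempty).image LNode.eminus ∪ {LNode.t}

lemma sum_lawlerCap_crossingEdges (hw : ∀ i ∈ Nets, 0 ≤ w i) {C : Finset α} (hC : C ⊆ C0)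
    (huC : u ∈ C) :
    ∑ p ∈ crossingEdges C0 r Nets net C, lawlerCap C0 r u Nets net w p.1 p.2 =
      ENNReal.ofReal (dwS Nets net w C0 * cut C0 r Nets net w C +
        cut C0 r Nets net w C0 * (dwS Nets net w C0 - dwS Nets net w C)) := by
  have hcut : ∀ i ∈ crossingNets C0 r Nets net C,
      lawlerCap C0 r u Nets net w (LNode.eminus i) (LNode.eplus i) =
        ENNReal.ofReal (dwS Nets net w C0 * w i) := fun i hi => by
    simp [lawlerCap, (Finset.mem_filter.1 hi).1]
  have hsink : ∀ v ∈ C0 \ C, lawlerCap C0 r u Nets net w (LNode.base v) LNode.t =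
      ENNReal.ofReal (cut C0 r Nets net w C0 * dw Nets net w v) := fun v hv => by
    obtain ⟨hv, hvC⟩ := Finset.mem_sdiff.1 hv
    simp [lawlerCap, hv, show v ≠ u from fun h => hvC (h ▸ huC)]
  have hD := dwS_nonneg Nets net w hw C0
  have hK := cut_nonneg Nets net w C0 r hw C0
  rw [crossingEdges, Finset.sum_union, Finset.sum_image, Finset.sum_image,
    Finset.sum_congr rfl hcut, Finset.sum_congr rfl hsink,
    ← ENNReal.ofReal_sum_of_nonneg, ← ENNReal.ofReal_sum_of_nonneg, ← Finset.mul_sum,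
    ← Finset.mul_sum, Finset.sum_sdiff_eq_sub hC, ← ENNReal.ofReal_add]
  · rfl
  · exact mul_nonneg hD (cut_nonneg Nets net w C0 r hw C)
  · exact mul_nonneg hK (sub_nonneg.2 (dwS_mono Nets net w hw hC))
  · exact fun v _ => mul_nonneg hK (dw_nonneg Nets net w hw v)
  · exact fun i hi => mul_nonneg hD (hw i (Finset.mem_filter.1 hi).1)
  · simp
  · simp
  · simp [Finset.disjoint_left]

@[simp] lemma base_mem_nodeSet {x : α} : LNode.base x ∈ nodeSet C0 Nets ↔ x ∈ C0 := by
  simp [nodeSet]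

@[simp] lemma eminus_mem_nodeSet {i : ι} : LNode.eminus i ∈ nodeSet C0 Nets ↔ i ∈ Nets := by
  simp [nodeSet]

@[simp] lemma eplus_mem_nodeSet {i : ι} : LNode.eplus i ∈ nodeSet C0 Nets ↔ i ∈ Nets := by
  simp [nodeSet]

@[simp] lemma s_mem_nodeSet : LNode.s ∈ nodeSet C0 Nets := by
  simp [nodeSet]

section SinkSide

variable {C0 r Nets net}

@[simp] lemma base_mem_sinkSide {C : Finset α} {x : α} :
    LNode.base x ∈ sinkSide C0 r Nets net C ↔ x ∈ C := by
  simp [sinkSide]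

@[simp] lemma eplus_mem_sinkSide {C : Finset α} {i : ι} :
    LNode.eplus i ∈ sinkSide C0 r Nets net C ↔ i ∈ Nets ∧ (net i ∩ C).Nonempty := by
  simp [sinkSide]

@[simp] lemma eminus_mem_sinkSide {C : Finset α} {i : ι} :
    LNode.eminus i ∈ sinkSide C0 r Nets net C ↔
      i ∈ Nets ∧ ¬(net i ∩ (insert r C0 \ C)).Nonempty := by
  simp [sinkSide]

@[simp] lemma s_notMem_sinkSide {C : Finset α} : LNode.s ∉ sinkSide C0 r Nets net C := by
  simp [sinkSide]

@[simp] lemma t_mem_sinkSide {C : Finset α} : LNode.t ∈ sinkSide C0 r Nets net C := by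
  simp [sinkSide]

lemma sinkSide_subset_nodeSet {C : Finset α} (hC : C ⊆ C0) :
    sinkSide C0 r Nets net C ⊆ nodeSet C0 Nets := by
  intro x hx
  simp only [sinkSide, Finset.mem_union, Finset.mem_image, Finset.mem_filter,
    Finset.mem_singleton] at hx
  rcases hx with ((⟨v, hv, rfl⟩ | ⟨i, hi, rfl⟩) | ⟨i, hi, rfl⟩) | rfl
  · simpa using hC hv
  · simpa using hi.1
  · simpa using hi.1
  · simp [nodeSet]

end SinkSide

lemma lawlerCap_eq_zero_of_notMem_crossingEdges {C : Finset α} (hrC : r ∉ C) {x y : LNode α ι}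
    (hx : x ∉ sinkSide C0 r Nets net C) (hy : y ∈ sinkSide C0 r Nets net C)
    (hxy : (x, y) ∉ crossingEdges C0 r Nets net C) :
    lawlerCap C0 r u Nets net w x y = 0 := by
  cases x <;> cases y <;> simp only [lawlerCap, ite_eq_right_iff, and_imp] <;>
    simp only [base_mem_sinkSide, eplus_mem_sinkSide, eminus_mem_sinkSide, t_mem_sinkSide,
      s_notMem_sinkSide, not_and, not_not] at hx hy
  case base.eminus a i =>
    exact fun _ hai haC0 => (hy.2 ⟨a, Finset.mem_inter.2 ⟨hai,
      Finset.mem_sdiff.2 ⟨Finset.mem_insert_of_mem haC0, hx⟩⟩⟩).elim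
  case s.eminus i =>
    exact fun _ hri => (hy.2 ⟨r, Finset.mem_inter.2 ⟨hri,
      Finset.mem_sdiff.2 ⟨Finset.mem_insert_self r C0, hrC⟩⟩⟩).elim
  case eplus.base i a =>
    exact fun hi hai _ => (hx hi ⟨a, Finset.mem_inter.2 ⟨hai, hy⟩⟩).elim
  case eminus.eplus i j =>
    rintro rfl hi
    exact (hxy (Finset.mem_union_left _ (Finset.mem_image.2
      ⟨i, Finset.mem_filter.2 ⟨hi, hy.2, hx hi⟩, rfl⟩))).elim
  case base.t a =>
    exact fun haC0 => (hxy (Finset.mem_union_right _ (Finset.mem_image.2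
      ⟨a, Finset.mem_sdiff.2 ⟨haC0, hx⟩, rfl⟩))).elim

lemma crossingEdges_subset_product_sinkSide (C : Finset α) :
    crossingEdges C0 r Nets net C ⊆
      (nodeSet C0 Nets \ sinkSide C0 r Nets net C) ×ˢ sinkSide C0 r Nets net C := by
  intro p hp
  simp only [crossingEdges, crossingNets, Finset.mem_union, Finset.mem_image, Finset.mem_filter,
    Finset.mem_sdiff] at hp
  rcases hp with ⟨i, ⟨hi, hiC, hiC'⟩, rfl⟩ | ⟨v, ⟨hv, hvC⟩, rfl⟩ <;> simp_all

lemma sum_lawlerCap_sinkSide (hw : ∀ i ∈ Nets, 0 ≤ w i) {C : Finset α} (hC : C ⊆ C0) (huC : u ∈ C)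
    (hrC : r ∉ C) :
    ∑ x ∈ nodeSet C0 Nets \ sinkSide C0 r Nets net C, ∑ y ∈ sinkSide C0 r Nets net C,
        lawlerCap C0 r u Nets net w x y =
      ENNReal.ofReal (dwS Nets net w C0 * cut C0 r Nets net w C +
        cut C0 r Nets net w C0 * (dwS Nets net w C0 - dwS Nets net w C)) := by
  rw [← Finset.sum_product', ← sum_lawlerCap_crossingEdges C0 r u Nets net w hw hC huC]
  refine (Finset.sum_subset (crossingEdges_subset_product_sinkSide C0 r Nets net C)
    fun p hp hpC => ?_).symm
  rw [Finset.mem_product, Finset.mem_sdiff] at hp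
  exact lawlerCap_eq_zero_of_notMem_crossingEdges C0 r u Nets net w hrC hp.1.2 hp.2 hpC

section FiniteCut

variable {C0 r u Nets net w} {B1 B2 : Finset (LNode α ι)}

lemma seed_mem_of_lawlerCap_ne_top (hu : u ∈ C0) (hun : B1 ∪ B2 = nodeSet C0 Nets)
    (ht : LNode.t ∈ B2) (hfin : ∀ x ∈ B1, ∀ y ∈ B2, lawlerCap C0 r u Nets net w x y ≠ ⊤) :
    u ∈ C0.filter fun x => LNode.base x ∈ B2 := by
  refine Finset.mem_filter.2 ⟨hu, by_contra fun hB2 => ?_⟩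
  have hB1 : LNode.base u ∈ B1 :=
    (Finset.mem_union.1 (hun ▸ (base_mem_nodeSet C0 Nets).2 hu)).resolve_right hB2
  exact hfin _ hB1 _ ht (by simp [lawlerCap, hu])

lemma crossingEdges_subset_of_lawlerCap_ne_top (hun : B1 ∪ B2 = nodeSet C0 Nets)
    (hs : LNode.s ∈ B1) (ht : LNode.t ∈ B2)
    (hfin : ∀ x ∈ B1, ∀ y ∈ B2, lawlerCap C0 r u Nets net w x y ≠ ⊤) :
    crossingEdges C0 r Nets net (C0.filter fun x => LNode.base x ∈ B2) ⊆ B1 ×ˢ B2 := by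
  have hB1 : ∀ {z}, z ∈ nodeSet C0 Nets → z ∉ B2 → z ∈ B1 := fun hz hz2 =>
    (Finset.mem_union.1 (hun ▸ hz)).resolve_right hz2
  intro p hp
  simp only [crossingEdges, crossingNets, Finset.mem_union, Finset.mem_image, Finset.mem_filter,
    Finset.mem_sdiff, Finset.Nonempty, Finset.mem_inter] at hp
  rcases hp with ⟨i, ⟨hi, ⟨x, hxi, hxC0, hxB2⟩, ⟨y, hyi, hy, hyB2⟩⟩, rfl⟩ | ⟨v, ⟨hv, hvB2⟩, rfl⟩
  · refine Finset.mem_product.2 ⟨hB1 (by simpa using hi) fun hB2 => ?_,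
      by_contra fun hB2 => hfin _ (hB1 (by simpa using hi) hB2) _ hxB2
        (by simp [lawlerCap, hi, hxi, hxC0])⟩
    rcases Finset.mem_insert.1 hy with rfl | hyC0
    · exact hfin _ hs _ hB2 (by simp [lawlerCap, hi, hyi])
    · exact hfin _ (hB1 (by simpa using hyC0) (fun h => hyB2 ⟨hyC0, h⟩)) _ hB2
        (by simp [lawlerCap, hi, hyi, hyC0])
  · exact Finset.mem_product.2 ⟨hB1 (by simpa using hv) (fun h => hvB2 ⟨hv, h⟩), ht⟩

end FiniteCut

theorem lawler_expansion_maxflow_iff_general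
    (C0 : Finset α) (u r : α) (hu : u ∈ C0) (hr : r ∉ C0)
    (Nets : Finset ι) (net : ι → Finset α) (w : ι → ℝ)
    (hw : ∀ i ∈ Nets, 0 < w i)
    (hdw : ∀ v ∈ C0, 0 < dw Nets net w v) :
    (∃ C : Finset α, C ⊂ C0 ∧ u ∈ C ∧
        cut C0 r Nets net w C / dwS Nets net w C <
          cut C0 r Nets net w C0 / dwS Nets net w C0) ↔
    (∃ B1 B2 : Finset (LNode α ι),
        B1 ∪ B2 = nodeSet C0 Nets ∧ Disjoint B1 B2 ∧
        LNode.s ∈ B1 ∧ LNode.t ∈ B2 ∧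
        (∑ x ∈ B1, ∑ y ∈ B2, lawlerCap C0 r u Nets net w x y) <
          ENNReal.ofReal (cut C0 r Nets net w C0 * dwS Nets net w C0)) := by
  have hw' : ∀ i ∈ Nets, 0 ≤ w i := fun i hi => (hw i hi).le
  have weight_lt_iff : ∀ C ⊆ C0, u ∈ C →
      (ENNReal.ofReal (dwS Nets net w C0 * cut C0 r Nets net w C +
          cut C0 r Nets net w C0 * (dwS Nets net w C0 - dwS Nets net w C)) <
        ENNReal.ofReal (cut C0 r Nets net w C0 * dwS Nets net w C0) ↔
      cut C0 r Nets net w C / dwS Nets net w C < cut C0 r Nets net w C0 / dwS Nets net w C0) :=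
    fun C hC huC => ofReal_lt_ofReal_iff_div_lt_div (cut_nonneg Nets net w C0 r hw' C)
      (cut_nonneg Nets net w C0 r hw' C0) (dwS_pos Nets net w hw' (hdw u hu) huC)
      (dwS_mono Nets net w hw' hC)
  constructor
  · rintro ⟨C, hCC0, huC, hlt⟩
    refine ⟨nodeSet C0 Nets \ sinkSide C0 r Nets net C, sinkSide C0 r Nets net C,
      Finset.sdiff_union_of_subset (sinkSide_subset_nodeSet hCC0.subset),
      Finset.sdiff_disjoint, by simp, t_mem_sinkSide, ?_⟩
    rwa [sum_lawlerCap_sinkSide C0 r u Nets net w hw' hCC0.subset huC fun h => hr (hCC0.subset h),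
      weight_lt_iff C hCC0.subset huC]
  · rintro ⟨B1, B2, hun, -, hs, ht, hlt⟩
    set C := C0.filter fun x => LNode.base x ∈ B2
    have hfin : ∀ x ∈ B1, ∀ y ∈ B2, lawlerCap C0 r u Nets net w x y ≠ ⊤ := fun x hx y hy =>
      ENNReal.sum_ne_top.1 (ENNReal.sum_ne_top.1 hlt.ne_top x hx) y hy
    have huC : u ∈ C := seed_mem_of_lawlerCap_ne_top hu hun ht hfin
    have hratio := (weight_lt_iff C (Finset.filter_subset _ _) huC).1 <| by
      rw [← sum_lawlerCap_crossingEdges C0 r u Nets net w hw' (Finset.filter_subset _ _) huC]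
      refine lt_of_le_of_lt ?_ hlt
      rw [← Finset.sum_product']
      exact Finset.sum_le_sum_of_subset (crossingEdges_subset_of_lawlerCap_ne_top hun hs ht hfin)
    have hCC0 : C ≠ C0 := fun hC => hratio.ne (by rw [hC])
    exact ⟨C, (Finset.filter_subset _ _).ssubset_of_ne hCC0, huC, hratio⟩

/-- There is a proper subset `C ⊂ C0` containing the seed node `u` with
`cut(C)/d_w(C) < cut(C0)/d_w(C0)` iff there is an s-t cut of the
Lawler-expansion flow graph of weight strictly less than `cut(C0)·d_w(C0)`. -/
theorem lawler_expansion_maxflow_iff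
    (C0 : Finset α) (u r : α) (hu : u ∈ C0) (hr : r ∉ C0)
    (Nets : Finset ι) (net : ι → Finset α) (w : ι → ℝ)
    (hsub : ∀ i ∈ Nets, net i ⊆ insert r C0)
    (hcard : ∀ i ∈ Nets, 2 ≤ (net i).card)
    (hw : ∀ i ∈ Nets, 0 < w i)
    (hdw : ∀ v ∈ C0, 0 < dw Nets net w v) :
    (∃ C : Finset α, C ⊂ C0 ∧ u ∈ C ∧
        cut C0 r Nets net w C / dwS Nets net w C <
          cut C0 r Nets net w C0 / dwS Nets net w C0) ↔
    (∃ B1 B2 : Finset (LNode α ι),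
        B1 ∪ B2 = nodeSet C0 Nets ∧ Disjoint B1 B2 ∧
        LNode.s ∈ B1 ∧ LNode.t ∈ B2 ∧
        (∑ x ∈ B1, ∑ y ∈ B2, lawlerCap C0 r u Nets net w x y) <
          ENNReal.ofReal (cut C0 r Nets net w C0 * dwS Nets net w C0)) :=
  lawler_expansion_maxflow_iff_general C0 u r hu hr Nets net w hw hdw

end Stmt2
end

section
/- Let C ⊆ S with d_μ(C) > 0, and assume d_μ(S) ≤ d_μ(V ∖ S). Then the motif conductance of C in G equals the ratio of the cut-net to the weighted volume of C in the hypergraph model: φ_μ(C) = cut(C)/d_w(C). -/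
namespace Stmt3

variable {V ι : Type*} [Fintype V] [DecidableEq V] [DecidableEq ι]

/-- motif degree `d_μ(v)` : the number of occurrences containing `v`. -/
def dmu (M : Finset ι) (occ : ι → Finset V) (v : V) : ℕ :=
  (M.filter (fun i => v ∈ occ i)).card

/-- motif volume `d_μ(C)`. -/
def dmuS (M : Finset ι) (occ : ι → Finset V) (C : Finset V) : ℕ :=
  ∑ v ∈ C, dmu M occ v

/-- motif cut of `C` : the number of occurrences containing at least one vertex
of `C` and at least one vertex of `V \ C`. -/
def motifCut (M : Finset ι) (occ : ι → Finset V) (C : Finset V) : ℕ :=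
  (M.filter (fun i =>
    (occ i ∩ C).Nonempty ∧ (occ i ∩ (Finset.univ \ C)).Nonempty)).card

/-- motif conductance `φ_μ(C)` as a real number. -/
noncomputable def phi (M : Finset ι) (occ : ι → Finset V) (C : Finset V) : ℝ :=
  (motifCut M occ C : ℝ) /
    min (dmuS M occ C : ℝ) (dmuS M occ (Finset.univ \ C) : ℝ)

/-- The net of the hypergraph model `H_μ` corresponding to the occurrence `i`:
the node set of `H_μ` is `S ∪ {r}`, encoded as `Option V` with `r = none`. -/
def hnet (S : Finset V) (occ : ι → Finset V) (i : ι) : Finset (Option V) :=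
  if occ i ⊆ S then (occ i).image some
  else insert none ((occ i ∩ S).image some)

/-- weighted degree in `H_μ` (all nets have weight 1). -/
def hdw (M : Finset ι) (S : Finset V) (occ : ι → Finset V) (x : Option V) : ℕ :=
  (M.filter (fun i => x ∈ hnet S occ i)).card

/-- weighted volume in `H_μ`. -/
def hdwS (M : Finset ι) (S : Finset V) (occ : ι → Finset V)
    (C : Finset (Option V)) : ℕ :=
  ∑ x ∈ C, hdw M S occ x

/-- cut-net of `C ⊆ S ∪ {r}` in `H_μ`. -/
def hcut (M : Finset ι) (S : Finset V) (occ : ι → Finset V)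
    (C : Finset (Option V)) : ℕ :=
  (M.filter (fun i => (hnet S occ i ∩ C).Nonempty ∧
    (hnet S occ i ∩ (insert none (S.image some) \ C)).Nonempty)).card

lemma mem_hnet_some {S : Finset V} {occ : ι → Finset V} {i : ι} {v : V}
    (hv : v ∈ S) : some v ∈ hnet S occ i ↔ v ∈ occ i := by
  unfold hnet
  split_ifs with h
  · simp
  · simp [hv]

lemma hdwS_eq (M : Finset ι) (S : Finset V) (occ : ι → Finset V)
    (C : Finset V) (hCS : C ⊆ S) :
    hdwS M S occ (C.image some) = dmuS M occ C := by
  unfold hdwS dmuS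
  rw [Finset.sum_image (fun a _ b _ h => Option.some_injective V h)]
  refine Finset.sum_congr rfl fun v hv => ?_
  unfold hdw dmu
  congr 1
  exact Finset.filter_congr fun i _ => by
    simp [mem_hnet_some (hCS hv)]

lemma hcut_eq (M : Finset ι) (S : Finset V) (occ : ι → Finset V)
    (C : Finset V) (hCS : C ⊆ S) :
    hcut M S occ (C.image some) = motifCut M occ C := by
  unfold hcut motifCut
  congr 1
  refine Finset.filter_congr fun i _ => ?_
  constructor
  · rintro ⟨⟨x, hx⟩, ⟨y, hy⟩⟩
    simp only [Finset.mem_inter, Finset.mem_image] at hx hy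
    obtain ⟨hx1, v, hvC, rfl⟩ := hx
    have hvOcc : v ∈ occ i := (mem_hnet_some (hCS hvC)).mp hx1
    refine ⟨⟨v, Finset.mem_inter.mpr ⟨hvOcc, hvC⟩⟩, ?_⟩
    by_cases h : occ i ⊆ S
    · obtain ⟨hy1, hy2⟩ := hy
      rw [Finset.mem_sdiff] at hy2
      unfold hnet at hy1
      rw [if_pos h] at hy1
      simp only [Finset.mem_image] at hy1
      obtain ⟨w, hw, rfl⟩ := hy1
      have hwC : w ∉ C := fun hc => hy2.2 (Finset.mem_image_of_mem _ hc)
      exact ⟨w, Finset.mem_inter.mpr ⟨hw, Finset.mem_sdiff.mpr ⟨Finset.mem_univ _, hwC⟩⟩⟩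
    · obtain ⟨w, hw⟩ := Finset.not_subset.mp h
      have : w ∉ C := fun hc => hw.2 (hCS hc)
      exact ⟨w, Finset.mem_inter.mpr ⟨hw.1, Finset.mem_sdiff.mpr ⟨Finset.mem_univ _, this⟩⟩⟩
  · rintro ⟨⟨x, hx⟩, ⟨y, hy⟩⟩
    rw [Finset.mem_inter] at hx hy
    refine ⟨⟨some x, Finset.mem_inter.mpr
      ⟨(mem_hnet_some (hCS hx.2)).mpr hx.1, Finset.mem_image_of_mem _ hx.2⟩⟩, ?_⟩
    have hyC : y ∉ C := (Finset.mem_sdiff.mp hy.2).2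
    by_cases h : occ i ⊆ S
    · refine ⟨some y, Finset.mem_inter.mpr ⟨(mem_hnet_some (h hy.1)).mpr hy.1, ?_⟩⟩
      refine Finset.mem_sdiff.mpr ⟨Finset.mem_insert_of_mem (Finset.mem_image_of_mem _ (h hy.1)), ?_⟩
      simp only [Finset.mem_image]
      rintro ⟨w, hw, hwe⟩
      exact hyC ((Option.some_injective V hwe) ▸ hw)
    · refine ⟨none, Finset.mem_inter.mpr ⟨?_, ?_⟩⟩
      · unfold hnet; rw [if_neg h]; exact Finset.mem_insert_self _ _
      · refine Finset.mem_sdiff.mpr ⟨Finset.mem_insert_self _ _, ?_⟩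
        simp

lemma dmuS_mono (M : Finset ι) (occ : ι → Finset V) {C D : Finset V}
    (h : C ⊆ D) : dmuS M occ C ≤ dmuS M occ D :=
  Finset.sum_le_sum_of_subset h

/-- Theorem 3.2: for `C ⊆ S` with `d_μ(C) > 0` and `d_μ(S) ≤ d_μ(V \ S)`, the
motif conductance of `C` in `G` equals `cut(C)/d_w(C)` in the hypergraph
model `H_μ`. -/
theorem motif_conductance_eq_hypergraph_ratio
    (G : SimpleGraph V) (M : Finset ι) (occ : ι → Finset V)
    (S C : Finset V) (hCS : C ⊆ S)
    (hpos : 0 < dmuS M occ C)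
    (hbal : dmuS M occ S ≤ dmuS M occ (Finset.univ \ S)) :
    phi M occ C =
      (hcut M S occ (C.image some) : ℝ) / (hdwS M S occ (C.image some) : ℝ) := by
  rw [hcut_eq M S occ C hCS, hdwS_eq M S occ C hCS]
  unfold phi
  have h1 : dmuS M occ C ≤ dmuS M occ S := dmuS_mono M occ hCS
  have h2 : dmuS M occ (Finset.univ \ S) ≤ dmuS M occ (Finset.univ \ C) :=
    dmuS_mono M occ (Finset.sdiff_subset_sdiff le_rfl hCS)
  rw [min_eq_left (by exact_mod_cast h1.trans (hbal.trans h2))]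

end Stmt3
end

section
/- For every C ⊆ S, the motif cut of C in G (the number of occurrences in M with at least one vertex in C and at least one vertex in V ∖ C) equals the cut-net cut(C) of C in the hypergraph model H_μ. -/
namespace Stmt4

variable {V ι : Type*} [Fintype V] [DecidableEq V] [DecidableEq ι]

/-- motif degree `d_μ(v)` : the number of occurrences containing `v`. -/
def dmu (M : Finset ι) (occ : ι → Finset V) (v : V) : ℕ :=
  (M.filter (fun i => v ∈ occ i)).card

/-- motif volume `d_μ(C)`. -/
def dmuS (M : Finset ι) (occ : ι → Finset V) (C : Finset V) : ℕ :=
  ∑ v ∈ C, dmu M occ v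

/-- motif cut of `C` : the number of occurrences containing at least one vertex
of `C` and at least one vertex of `V \ C`. -/
def motifCut (M : Finset ι) (occ : ι → Finset V) (C : Finset V) : ℕ :=
  (M.filter (fun i =>
    (occ i ∩ C).Nonempty ∧ (occ i ∩ (Finset.univ \ C)).Nonempty)).card

/-- motif conductance `φ_μ(C)` as a real number. -/
noncomputable def phi (M : Finset ι) (occ : ι → Finset V) (C : Finset V) : ℝ :=
  (motifCut M occ C : ℝ) /
    min (dmuS M occ C : ℝ) (dmuS M occ (Finset.univ \ C) : ℝ)

/-- The net of the hypergraph model `H_μ` corresponding to the occurrence `i`: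
the node set of `H_μ` is `S ∪ {r}`, encoded as `Option V` with `r = none`. -/
def hnet (S : Finset V) (occ : ι → Finset V) (i : ι) : Finset (Option V) :=
  if occ i ⊆ S then (occ i).image some
  else insert none ((occ i ∩ S).image some)

/-- weighted degree in `H_μ` (all nets have weight 1). -/
def hdw (M : Finset ι) (S : Finset V) (occ : ι → Finset V) (x : Option V) : ℕ :=
  (M.filter (fun i => x ∈ hnet S occ i)).card

/-- weighted volume in `H_μ`. -/
def hdwS (M : Finset ι) (S : Finset V) (occ : ι → Finset V)
    (C : Finset (Option V)) : ℕ :=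
  ∑ x ∈ C, hdw M S occ x

/-- cut-net of `C ⊆ S ∪ {r}` in `H_μ`. -/
def hcut (M : Finset ι) (S : Finset V) (occ : ι → Finset V)
    (C : Finset (Option V)) : ℕ :=
  (M.filter (fun i => (hnet S occ i ∩ C).Nonempty ∧
    (hnet S occ i ∩ (insert none (S.image some) \ C)).Nonempty)).card

end Stmt4

namespace Finset

variable {α β : Type*} [DecidableEq α] [DecidableEq β] {f : α → β} {C : Finset α} {D : Finset β}

lemma image_inter_nonempty_iff_of_mem_iff (h : ∀ a, f a ∈ D ↔ a ∈ C) (A : Finset α) :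
    (A.image f ∩ D).Nonempty ↔ (A ∩ C).Nonempty := by
  simp [Finset.Nonempty, h]

lemma image_sdiff_nonempty_iff_of_mem_iff (h : ∀ a, f a ∈ D ↔ a ∈ C) (A : Finset α) :
    (A.image f \ D).Nonempty ↔ (A \ C).Nonempty := by
  simp [Finset.Nonempty, h]

end Finset

namespace Stmt4

section Collapse

variable {V : Type*} [DecidableEq V]

/-- Contracts `V \ S` to the root `r = none`; the nets of `H_μ` are the images of the
occurrences under this map (`hnet_eq_image_collapseToRoot`). -/
def collapseToRoot (S : Finset V) (v : V) : Option V :=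
  if v ∈ S then some v else none

lemma collapseToRoot_mem_image_some_iff {S C : Finset V} (hCS : C ⊆ S) (v : V) :
    collapseToRoot S v ∈ C.image some ↔ v ∈ C := by
  unfold collapseToRoot
  split_ifs with hv
  · simp
  · simpa using fun hvC => hv (hCS hvC)

lemma collapseToRoot_mem_nodes (S : Finset V) (v : V) :
    collapseToRoot S v ∈ insert none (S.image some) := by
  unfold collapseToRoot
  split_ifs with hv <;> simp [hv]

lemma hnet_eq_image_collapseToRoot {ι : Type*} (S : Finset V) (occ : ι → Finset V) (i : ι) :
    hnet S occ i = (occ i).image (collapseToRoot S) := by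
  ext x
  unfold hnet collapseToRoot
  split_ifs with h <;> grind

lemma hnet_subset_nodes {ι : Type*} (S : Finset V) (occ : ι → Finset V) (i : ι) :
    hnet S occ i ⊆ insert none (S.image some) := by
  rw [hnet_eq_image_collapseToRoot, Finset.image_subset_iff]
  exact fun v _ => collapseToRoot_mem_nodes S v

end Collapse

variable {V ι : Type*} [Fintype V] [DecidableEq V] [DecidableEq ι]

open Finset in
theorem motif_cut_eq_cut_net_general
    (M : Finset ι) (occ : ι → Finset V) (S : Finset V) :
    ∀ C : Finset V, C ⊆ S →
      motifCut M occ C = hcut M S occ (C.image some) := by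
  intro C hCS
  have hmem := collapseToRoot_mem_image_some_iff hCS
  refine congrArg card (filter_congr fun i _ => ?_)
  rw [← inter_sdiff_assoc (hnet S occ i), inter_eq_left.mpr (hnet_subset_nodes S occ i),
    ← inter_sdiff_assoc, inter_univ, hnet_eq_image_collapseToRoot,
    image_inter_nonempty_iff_of_mem_iff hmem, image_sdiff_nonempty_iff_of_mem_iff hmem]

/-- For every `C ⊆ S`, the motif cut of `C` in `G` equals the cut-net of
`C` in the hypergraph model `H_μ`. -/
theorem motif_cut_eq_cut_net
    (G : SimpleGraph V) (M : Finset ι) (occ : ι → Finset V) (S : Finset V) :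
    ∀ C : Finset V, C ⊆ S →
      motifCut M occ C = hcut M S occ (C.image some) :=
  motif_cut_eq_cut_net_general M occ S

end Stmt4
end

section
/- Assume every net in the family has at most 3 elements. Let C ⊆ C0 with u ∈ C, and consider the s-t cut (B1,B2) of the clique-expansion flow graph G_f with B2 = C ∪ {t} and B1 = (C0 ∖ C) ∪ {s}. Then the weight of this cut equals cut(C0)·d_w(C0∖C) + cut(C)·d_w(C0); in particular it is finite. -/
open scoped ENNReal

namespace Stmt8

/-- Nodes of the flow graph: the elements of `C0` (via `base`), a source `s`
(with which the contracted node `r` is identified) and a sink `t`. -/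
inductive Node (α : Type*) where
  | base : α → Node α
  | s : Node α
  | t : Node α
  deriving DecidableEq

variable {α ι : Type*} [DecidableEq α] [DecidableEq ι]

/-- `cut C` : total weight of the nets containing an element of `C` and an
element of `(C0 ∪ {r}) \ C`. -/
def cut (C0 : Finset α) (r : α) (Nets : Finset ι) (net : ι → Finset α) (w : ι → ℝ)
    (C : Finset α) : ℝ :=
  ∑ i ∈ Nets.filter
      (fun i => (net i ∩ C).Nonempty ∧ (net i ∩ (insert r C0 \ C)).Nonempty), w i

/-- weighted degree `d_w(v)` : total weight of the nets containing `v`. -/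
def dw (Nets : Finset ι) (net : ι → Finset α) (w : ι → ℝ) (v : α) : ℝ :=
  ∑ i ∈ Nets.filter (fun i => v ∈ net i), w i

/-- weighted volume `d_w(C)`. -/
def dwS (Nets : Finset ι) (net : ι → Finset α) (w : ι → ℝ) (C : Finset α) : ℝ :=
  ∑ v ∈ C, dw Nets net w v

/-- Capacities of the clique-expansion flow graph `G_f`. -/
noncomputable def cliqueCap (C0 : Finset α) (r u : α) (Nets : Finset ι)
    (net : ι → Finset α) (w : ι → ℝ) : Node α → Node α → ℝ≥0∞
  | Node.base a, Node.base b =>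
      if a ∈ C0 ∧ b ∈ C0 ∧ a ≠ b then
        ENNReal.ofReal (dwS Nets net w C0 *
          ∑ i ∈ Nets.filter (fun i => a ∈ net i ∧ b ∈ net i),
            w i / (((net i).card : ℝ) - 1))
      else 0
  | Node.s, Node.base b =>
      if b ∈ C0 then
        ENNReal.ofReal (dwS Nets net w C0 *
          ∑ i ∈ Nets.filter (fun i => r ∈ net i ∧ b ∈ net i),
            w i / (((net i).card : ℝ) - 1))
      else 0
  | Node.base a, Node.t =>
      if a ∈ C0 then
        (if a = u then ⊤
         else ENNReal.ofReal (cut C0 r Nets net w C0 * dw Nets net w a))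
      else 0
  | _, _ => 0

/-- The node set of the flow graph: `C0 ∪ {s, t}`. -/
def nodeSet (C0 : Finset α) : Finset (Node α) :=
  C0.image Node.base ∪ {Node.s, Node.t}

private lemma key_arith (wi : ℝ) (p q c : ℕ) (hpq : p + q = c) (h2 : 2 ≤ c) (h3 : c ≤ 3) :
    (p : ℝ) * ((q : ℝ) * (wi / ((c : ℝ) - 1))) = if 0 < q ∧ 0 < p then wi else 0 := by
  have hp : p ≤ 3 := by omega
  have hq : q ≤ 3 := by omega
  interval_cases c <;> interval_cases p <;> interval_cases q <;>
    first
      | (exfalso; omega)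
      | (norm_num; done)
      | (norm_num; ring)

private lemma core_count (C0 : Finset α) (r : α) (hr : r ∉ C0)
    (Nets : Finset ι) (net : ι → Finset α) (w : ι → ℝ)
    (hsub : ∀ i ∈ Nets, net i ⊆ insert r C0)
    (hcard : ∀ i ∈ Nets, 2 ≤ (net i).card)
    (hsize : ∀ i ∈ Nets, (net i).card ≤ 3)
    (C : Finset α) (hC : C ⊆ C0) :
    (∑ a ∈ insert r (C0 \ C), ∑ b ∈ C,
        ∑ i ∈ Nets.filter (fun i => a ∈ net i ∧ b ∈ net i),
          w i / (((net i).card : ℝ) - 1))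
      = ∑ i ∈ Nets.filter
          (fun i => (net i ∩ C).Nonempty ∧ (net i ∩ (insert r C0 \ C)).Nonempty), w i := by
  classical
  have hrC : r ∉ C := fun h => hr (hC h)
  have hE : insert r C0 \ C = insert r (C0 \ C) := Finset.insert_sdiff_of_notMem C0 hrC
  set E : Finset α := insert r (C0 \ C) with hEdef
  have hdisEC : Disjoint E C := by
    rw [hEdef, Finset.disjoint_insert_left]
    exact ⟨hrC, Finset.sdiff_disjoint⟩
  have hEC : E ∪ C = insert r C0 := by
    rw [hEdef, Finset.insert_union, Finset.sdiff_union_of_subset hC]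
  rw [hE]
  calc (∑ a ∈ E, ∑ b ∈ C,
        ∑ i ∈ Nets.filter (fun i => a ∈ net i ∧ b ∈ net i),
          w i / (((net i).card : ℝ) - 1))
      = ∑ a ∈ E, ∑ i ∈ Nets, ∑ b ∈ C,
          (if a ∈ net i ∧ b ∈ net i then w i / (((net i).card : ℝ) - 1) else 0) := by
        refine Finset.sum_congr rfl fun a _ => ?_
        rw [← Finset.sum_comm]
        exact Finset.sum_congr rfl fun b _ => Finset.sum_filter _ _
    _ = ∑ i ∈ Nets, ∑ a ∈ E, ∑ b ∈ C,
          (if a ∈ net i ∧ b ∈ net i then w i / (((net i).card : ℝ) - 1) else 0) :=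
        Finset.sum_comm
    _ = ∑ i ∈ Nets, (if (net i ∩ C).Nonempty ∧ (net i ∩ E).Nonempty then w i else 0) := by
        refine Finset.sum_congr rfl fun i hi => ?_
        have h1 : ∀ a, (∑ b ∈ C, if a ∈ net i ∧ b ∈ net i
              then w i / (((net i).card : ℝ) - 1) else 0)
            = if a ∈ net i
              then ((C.filter (· ∈ net i)).card : ℝ) * (w i / (((net i).card : ℝ) - 1))
              else 0 := by
          intro a
          by_cases ha : a ∈ net i
          · simp only [ha, true_and, if_true]
            rw [← Finset.sum_filter, Finset.sum_const, nsmul_eq_mul]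
          · simp [ha]
        rw [Finset.sum_congr rfl (fun a _ => h1 a), ← Finset.sum_filter,
          Finset.sum_const, nsmul_eq_mul]
        rw [Finset.filter_mem_eq_inter, Finset.filter_mem_eq_inter,
          Finset.inter_comm E, Finset.inter_comm C]
        have hdis : Disjoint (net i ∩ E) (net i ∩ C) :=
          hdisEC.mono Finset.inter_subset_right Finset.inter_subset_right
        have hpq : (net i ∩ E).card + (net i ∩ C).card = (net i).card := by
          rw [← Finset.card_union_of_disjoint hdis, ← Finset.inter_union_distrib_left, hEC,
            Finset.inter_eq_left.mpr (hsub i hi)]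
        have := key_arith (w i) (net i ∩ E).card (net i ∩ C).card (net i).card hpq
          (hcard i hi) (hsize i hi)
        rw [this]
        congr 1
        simp [Finset.card_pos, and_comm]
    _ = ∑ i ∈ Nets.filter
          (fun i => (net i ∩ C).Nonempty ∧ (net i ∩ E).Nonempty), w i :=
        (Finset.sum_filter _ _).symm

/-- For `C ⊆ C0` with `u ∈ C`, the weight of the s-t cut `(B1, B2)` with
`B2 = C ∪ {t}` and `B1 = (C0 ∖ C) ∪ {s}` of the clique-expansion flow graph
equals `cut(C0)·d_w(C0∖C) + cut(C)·d_w(C0)`; in particular it is finite. -/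
theorem clique_expansion_cut_weight
    (C0 : Finset α) (u r : α) (hu : u ∈ C0) (hr : r ∉ C0)
    (Nets : Finset ι) (net : ι → Finset α) (w : ι → ℝ)
    (hsub : ∀ i ∈ Nets, net i ⊆ insert r C0)
    (hcard : ∀ i ∈ Nets, 2 ≤ (net i).card)
    (hsize : ∀ i ∈ Nets, (net i).card ≤ 3)
    (hw : ∀ i ∈ Nets, 0 < w i)
    (C : Finset α) (hC : C ⊆ C0) (huC : u ∈ C) :
    (∑ x ∈ ((C0 \ C).image Node.base ∪ {Node.s} : Finset (Node α)),
      ∑ y ∈ (C.image Node.base ∪ {Node.t} : Finset (Node α)),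
        cliqueCap C0 r u Nets net w x y) =
      ENNReal.ofReal (cut C0 r Nets net w C0 * dwS Nets net w (C0 \ C) +
        cut C0 r Nets net w C * dwS Nets net w C0) ∧
    (∑ x ∈ ((C0 \ C).image Node.base ∪ {Node.s} : Finset (Node α)),
      ∑ y ∈ (C.image Node.base ∪ {Node.t} : Finset (Node α)),
        cliqueCap C0 r u Nets net w x y) ≠ ⊤ := by
  classical
  -- abbreviations
  set W := dwS Nets net w C0 with hWdef
  set K := cut C0 r Nets net w C0 with hKdef
  set g : α → α → ℝ := fun a b =>
    ∑ i ∈ Nets.filter (fun i => a ∈ net i ∧ b ∈ net i), w i / (((net i).card : ℝ) - 1)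
    with hgdef
  -- nonnegativity facts
  have hw0 : ∀ i ∈ Nets, 0 ≤ w i := fun i hi => (hw i hi).le
  have hdw0 : ∀ v, 0 ≤ dw Nets net w v := fun v =>
    Finset.sum_nonneg fun i hi => hw0 i (Finset.mem_filter.mp hi).1
  have hW0 : 0 ≤ W := Finset.sum_nonneg fun v _ => hdw0 v
  have hK0 : 0 ≤ K := Finset.sum_nonneg fun i hi => hw0 i (Finset.mem_filter.mp hi).1
  have hg0 : ∀ a b, 0 ≤ g a b := by
    intro a b
    refine Finset.sum_nonneg fun i hi => ?_
    have hi' := Finset.mem_filter.mp hi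
    have h2 : (2:ℝ) ≤ ((net i).card : ℝ) := by exact_mod_cast hcard i hi'.1
    exact div_nonneg (hw0 i hi'.1) (by linarith)
  have hrC : r ∉ C := fun h => hr (hC h)
  have hrA : r ∉ C0 \ C := fun h => hr (Finset.mem_sdiff.mp h).1
  -- injectivity / disjointness
  have hinj : ∀ (s : Finset α), ∀ x ∈ s, ∀ y ∈ s, Node.base x = Node.base y → x = y :=
    fun s x _ y _ h => by injection h
  have hd1 : Disjoint ((C0 \ C).image Node.base) ({Node.s} : Finset (Node α)) := by
    rw [Finset.disjoint_right]
    intro x hx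
    rw [Finset.mem_singleton] at hx
    subst hx
    simp
  have hd2 : Disjoint (C.image Node.base) ({Node.t} : Finset (Node α)) := by
    rw [Finset.disjoint_right]
    intro x hx
    rw [Finset.mem_singleton] at hx
    subst hx
    simp
  -- capacity evaluations
  have capab : ∀ a ∈ C0 \ C, ∀ b ∈ C,
      cliqueCap C0 r u Nets net w (Node.base a) (Node.base b)
        = ENNReal.ofReal (W * g a b) := by
    intro a ha b hb
    have ha' := Finset.mem_sdiff.mp ha
    have hab : a ≠ b := fun h => ha'.2 (h ▸ hb)
    simp only [cliqueCap, hWdef, hgdef]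
    rw [if_pos ⟨ha'.1, hC hb, hab⟩]
  have capat : ∀ a ∈ C0 \ C,
      cliqueCap C0 r u Nets net w (Node.base a) Node.t
        = ENNReal.ofReal (K * dw Nets net w a) := by
    intro a ha
    have ha' := Finset.mem_sdiff.mp ha
    have hau : a ≠ u := fun h => ha'.2 (h ▸ huC)
    simp only [cliqueCap, hKdef]
    rw [if_pos ha'.1, if_neg hau]
  have capsb : ∀ b ∈ C,
      cliqueCap C0 r u Nets net w Node.s (Node.base b)
        = ENNReal.ofReal (W * g r b) := by
    intro b hb
    simp only [cliqueCap, hWdef, hgdef]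
    rw [if_pos (hC hb)]
  have capst : cliqueCap C0 r u Nets net w Node.s Node.t = 0 := rfl
  -- per-row sums
  have innerA : ∀ a ∈ C0 \ C,
      (∑ y ∈ (C.image Node.base ∪ {Node.t} : Finset (Node α)),
          cliqueCap C0 r u Nets net w (Node.base a) y)
        = ENNReal.ofReal ((∑ b ∈ C, W * g a b) + K * dw Nets net w a) := by
    intro a ha
    rw [Finset.sum_union hd2, Finset.sum_image (hinj C), Finset.sum_singleton,
      Finset.sum_congr rfl (fun b hb => capab a ha b hb), capat a ha,
      ← ENNReal.ofReal_sum_of_nonneg (fun b _ => mul_nonneg hW0 (hg0 a b)),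
      ← ENNReal.ofReal_add
        (Finset.sum_nonneg fun b _ => mul_nonneg hW0 (hg0 a b))
        (mul_nonneg hK0 (hdw0 a))]
  have innerS :
      (∑ y ∈ (C.image Node.base ∪ {Node.t} : Finset (Node α)),
          cliqueCap C0 r u Nets net w Node.s y)
        = ENNReal.ofReal (∑ b ∈ C, W * g r b) := by
    rw [Finset.sum_union hd2, Finset.sum_image (hinj C), Finset.sum_singleton,
      Finset.sum_congr rfl (fun b hb => capsb b hb), capst, add_zero,
      ← ENNReal.ofReal_sum_of_nonneg (fun b _ => mul_nonneg hW0 (hg0 r b))]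
  -- the total cut weight as ofReal of a real number
  have step1 :
      (∑ x ∈ ((C0 \ C).image Node.base ∪ {Node.s} : Finset (Node α)),
        ∑ y ∈ (C.image Node.base ∪ {Node.t} : Finset (Node α)),
          cliqueCap C0 r u Nets net w x y)
      = ENNReal.ofReal
          ((∑ a ∈ C0 \ C, ((∑ b ∈ C, W * g a b) + K * dw Nets net w a))
            + ∑ b ∈ C, W * g r b) := by
    rw [Finset.sum_union hd1, Finset.sum_image (hinj _), Finset.sum_singleton,
      Finset.sum_congr rfl innerA, innerS,
      ← ENNReal.ofReal_sum_of_nonneg (fun a _ =>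
        add_nonneg (Finset.sum_nonneg fun b _ => mul_nonneg hW0 (hg0 a b))
          (mul_nonneg hK0 (hdw0 a))),
      ← ENNReal.ofReal_add
        (Finset.sum_nonneg fun a _ =>
          add_nonneg (Finset.sum_nonneg fun b _ => mul_nonneg hW0 (hg0 a b))
            (mul_nonneg hK0 (hdw0 a)))
        (Finset.sum_nonneg fun b _ => mul_nonneg hW0 (hg0 r b))]
  -- the real identity
  have main_real :
      ((∑ a ∈ C0 \ C, ((∑ b ∈ C, W * g a b) + K * dw Nets net w a))
        + ∑ b ∈ C, W * g r b)
      = K * dwS Nets net w (C0 \ C) + cut C0 r Nets net w C * W := by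
    have hcore : (∑ a ∈ insert r (C0 \ C), ∑ b ∈ C, g a b) = cut C0 r Nets net w C :=
      core_count C0 r hr Nets net w hsub hcard hsize C hC
    rw [Finset.sum_add_distrib]
    have h1 : (∑ a ∈ C0 \ C, K * dw Nets net w a) = K * dwS Nets net w (C0 \ C) := by
      rw [dwS, Finset.mul_sum]
    have h2 : ((∑ a ∈ C0 \ C, ∑ b ∈ C, W * g a b) + ∑ b ∈ C, W * g r b)
        = cut C0 r Nets net w C * W := by
      rw [← hcore, Finset.sum_insert hrA, add_mul, Finset.sum_mul]
      rw [add_comm]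
      congr 1
      · exact Finset.sum_congr rfl fun b _ => mul_comm _ _
      · rw [Finset.sum_mul]
        refine Finset.sum_congr rfl fun a _ => ?_
        rw [Finset.sum_mul]
        exact Finset.sum_congr rfl fun b _ => mul_comm _ _
    rw [h1, add_right_comm, h2, add_comm]
  constructor
  · rw [step1, main_real]
  · rw [step1]
    exact ENNReal.ofReal_ne_top


end Stmt8
end

section
/- Let C ⊆ C0 with u ∈ C (no restriction on net sizes), and consider the s-t cut (B1,B2) of the Lawler-expansion flow graph with B2 = C ∪ {e⁻ : all pins of e lie in C} ∪ {e⁺ : e has at least one pin in C} ∪ {t} and B1 the complement. Then the weight of this cut equals cut(C0)·d_w(C0∖C) + cut(C)·d_w(C0); in particular it is finite, and for each net e crossing (C, (C0∪{r})∖C) exactly one cut edge, namely (e⁻,e⁺) of capacity d_w(C0)·w(e), crosses from B1 to B2 among the net-expansion edges. -/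
open scoped ENNReal

namespace Stmt9

/-- Nodes of the Lawler-expansion flow graph: the elements of `C0` (via `base`),
two auxiliary nodes `eminus i`, `eplus i` for each net `i`, a source `s`
(with which the contracted node `r` is identified) and a sink `t`. -/
inductive LNode (α ι : Type*) where
  | base : α → LNode α ι
  | eminus : ι → LNode α ι
  | eplus : ι → LNode α ι
  | s : LNode α ι
  | t : LNode α ι
  deriving DecidableEq

variable {α ι : Type*} [DecidableEq α] [DecidableEq ι]

/-- `cut C` : total weight of the nets containing an element of `C` and an
element of `(C0 ∪ {r}) \ C`. -/
def cut (C0 : Finset α) (r : α) (Nets : Finset ι) (net : ι → Finset α) (w : ι → ℝ)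
    (C : Finset α) : ℝ :=
  ∑ i ∈ Nets.filter
      (fun i => (net i ∩ C).Nonempty ∧ (net i ∩ (insert r C0 \ C)).Nonempty), w i

/-- weighted degree `d_w(v)` : total weight of the nets containing `v`. -/
def dw (Nets : Finset ι) (net : ι → Finset α) (w : ι → ℝ) (v : α) : ℝ :=
  ∑ i ∈ Nets.filter (fun i => v ∈ net i), w i

/-- weighted volume `d_w(C)`. -/
def dwS (Nets : Finset ι) (net : ι → Finset α) (w : ι → ℝ) (C : Finset α) : ℝ :=
  ∑ v ∈ C, dw Nets net w v

/-- Capacities of the Lawler-expansion flow graph. -/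
noncomputable def lawlerCap (C0 : Finset α) (r u : α) (Nets : Finset ι)
    (net : ι → Finset α) (w : ι → ℝ) : LNode α ι → LNode α ι → ℝ≥0∞
  | LNode.eminus i, LNode.eplus j =>
      if i = j ∧ i ∈ Nets then ENNReal.ofReal (dwS Nets net w C0 * w i) else 0
  | LNode.base x, LNode.eminus i =>
      if i ∈ Nets ∧ x ∈ net i ∧ x ∈ C0 then ⊤ else 0
  | LNode.s, LNode.eminus i =>
      if i ∈ Nets ∧ r ∈ net i then ⊤ else 0
  | LNode.eplus i, LNode.base x =>
      if i ∈ Nets ∧ x ∈ net i ∧ x ∈ C0 then ⊤ else 0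
  | LNode.base v, LNode.t =>
      if v ∈ C0 then
        (if v = u then ⊤
         else ENNReal.ofReal (cut C0 r Nets net w C0 * dw Nets net w v))
      else 0
  | _, _ => 0

/-- The node set of the Lawler-expansion flow graph:
`C0 ∪ {s, t} ∪ {e⁻, e⁺ : e ∈ 𝓔}`. -/
def nodeSet (C0 : Finset α) (Nets : Finset ι) : Finset (LNode α ι) :=
  C0.image LNode.base ∪ Nets.image LNode.eminus ∪ Nets.image LNode.eplus ∪
    {LNode.s, LNode.t}

/-- The block `B2` of the cut considered in the theorem:
`B2 = C ∪ {e⁻ : all pins of e lie in C} ∪ {e⁺ : e has a pin in C} ∪ {t}`. -/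
def B2 (C0 : Finset α) (Nets : Finset ι) (net : ι → Finset α)
    (C : Finset α) : Finset (LNode α ι) :=
  C.image LNode.base ∪
    (Nets.filter (fun i => net i ⊆ C)).image LNode.eminus ∪
    (Nets.filter (fun i => (net i ∩ C).Nonempty)).image LNode.eplus ∪
    {LNode.t}

/-- The block `B1` is the complement of `B2` in the node set. -/
def B1 (C0 : Finset α) (Nets : Finset ι) (net : ι → Finset α)
    (C : Finset α) : Finset (LNode α ι) :=
  nodeSet C0 Nets \ B2 C0 Nets net C

/-!
No edge of infinite capacity leaves `B1` for `B2`: an `e⁻` in `B2` has all its pins in `C`,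
an `e⁺` in `B1` has none, and `s = r ∉ C`. What remains are the edges `(v, t)` for
`v ∈ C0 \ C`, of capacity `cut(C0)·d_w(v)` since `v ≠ u`, and the edges `(e⁻, e⁺)` for the
nets `e` crossing `C`, of capacity `d_w(C0)·w(e)`; their sum is the claimed weight.
-/

lemma not_subset_of_inter_sdiff_nonempty {s t c : Finset α} (h : (s ∩ (t \ c)).Nonempty) :
    ¬ s ⊆ c := by
  obtain ⟨x, hx⟩ := h
  rw [Finset.mem_inter, Finset.mem_sdiff] at hx
  exact fun hs => hx.2.2 (hs hx.1)

section Degree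

variable {κ : Type*} {Nets : Finset κ} {net : κ → Finset α} {w : κ → ℝ}

lemma le_dw_of_mem (hw : ∀ i ∈ Nets, 0 ≤ w i) {i : κ} {v : α} (hi : i ∈ Nets)
    (hv : v ∈ net i) :
    w i ≤ dw Nets net w v :=
  Finset.single_le_sum (fun j hj => hw j (Finset.mem_filter.1 hj).1)
    (Finset.mem_filter.2 ⟨hi, hv⟩)

lemma dw_nonneg (hw : ∀ i ∈ Nets, 0 ≤ w i) (v : α) : 0 ≤ dw Nets net w v :=
  Finset.sum_nonneg fun i hi => hw i (Finset.mem_filter.1 hi).1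

lemma dw_le_dwS (hw : ∀ i ∈ Nets, 0 ≤ w i) {S : Finset α} {v : α} (hv : v ∈ S) :
    dw Nets net w v ≤ dwS Nets net w S :=
  Finset.single_le_sum (fun v' _ => dw_nonneg hw v') hv

lemma dwS_nonneg (hw : ∀ i ∈ Nets, 0 ≤ w i) (S : Finset α) : 0 ≤ dwS Nets net w S :=
  Finset.sum_nonneg fun v _ => dw_nonneg hw v

lemma dwS_pos (hw : ∀ i ∈ Nets, 0 < w i) {S : Finset α} {i : κ} {v : α} (hi : i ∈ Nets)
    (hv : v ∈ net i) (hvS : v ∈ S) : 0 < dwS Nets net w S :=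
  have hw0 : ∀ i ∈ Nets, 0 ≤ w i := fun i hi => (hw i hi).le
  (hw i hi).trans_le ((le_dw_of_mem hw0 hi hv).trans (dw_le_dwS hw0 hvS))

lemma cut_nonneg (hw : ∀ i ∈ Nets, 0 ≤ w i) (C0 : Finset α) (r : α) (S : Finset α) :
    0 ≤ cut C0 r Nets net w S :=
  Finset.sum_nonneg fun i hi => hw i (Finset.mem_filter.1 hi).1

end Degree

section CutWeight

variable {C0 : Finset α} {r u : α} {Nets : Finset ι} {net : ι → Finset α} {w : ι → ℝ}
  {C : Finset α}

def crossingNets (C0 : Finset α) (r : α) (Nets : Finset ι) (net : ι → Finset α)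
    (C : Finset α) : Finset ι :=
  Nets.filter fun i => (net i ∩ C).Nonempty ∧ (net i ∩ (insert r C0 \ C)).Nonempty

def cutEdges (C0 : Finset α) (r : α) (Nets : Finset ι) (net : ι → Finset α)
    (C : Finset α) : Finset (LNode α ι × LNode α ι) :=
  (C0 \ C).image (fun v => (LNode.base v, LNode.t)) ∪
    (crossingNets C0 r Nets net C).image (fun i => (LNode.eminus i, LNode.eplus i))

lemma cutEdges_subset : cutEdges C0 r Nets net C ⊆ B1 C0 Nets net C ×ˢ B2 C0 Nets net C := by
  intro p hp
  simp only [cutEdges, Finset.mem_union, Finset.mem_image] at hp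
  rcases hp with ⟨v, hv, rfl⟩ | ⟨i, hi, rfl⟩
  · simp_all [B1, B2, nodeSet]
  · have hnotsub := not_subset_of_inter_sdiff_nonempty (Finset.mem_filter.1 hi).2.2
    simp_all [B1, B2, nodeSet, crossingNets]

lemma mem_cutEdges_of_lawlerCap_ne_zero (hr : r ∉ C0)
    (hsub : ∀ i ∈ Nets, net i ⊆ insert r C0) (hC : C ⊆ C0)
    {x y : LNode α ι} (hx : x ∈ B1 C0 Nets net C) (hy : y ∈ B2 C0 Nets net C)
    (hxy : lawlerCap C0 r u Nets net w x y ≠ 0) :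
    (x, y) ∈ cutEdges C0 r Nets net C := by
  cases x <;> cases y <;>
    simp [B1, B2, nodeSet, lawlerCap, cutEdges, crossingNets] at hx hy hxy ⊢
  case base.t => exact hx
  case base.eminus v i => exact hx.2 (hy.2 hxy.2.1)
  case eplus.base i v =>
    exact Finset.eq_empty_iff_forall_notMem.1 (hx.2 hx.1) v (Finset.mem_inter.2 ⟨hxy.2.1, hy⟩)
  case s.eminus i => exact hr (hC (hy.2 hxy.2))
  case eminus.eplus i j =>
    obtain ⟨rfl, hi, -⟩ := hxy
    obtain ⟨x, hxi, hxC⟩ := Finset.not_subset.1 (hx.2 hi)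
    exact ⟨⟨hi, hy.2, x, Finset.mem_inter.2 ⟨hxi, Finset.mem_sdiff.2 ⟨hsub i hi hxi, hxC⟩⟩⟩, rfl⟩

lemma sum_cutEdges {M : Type*} [AddCommMonoid M] (f : LNode α ι × LNode α ι → M) :
    ∑ p ∈ cutEdges C0 r Nets net C, f p =
      ∑ v ∈ C0 \ C, f (LNode.base v, LNode.t) +
        ∑ i ∈ crossingNets C0 r Nets net C, f (LNode.eminus i, LNode.eplus i) := by
  rw [cutEdges, Finset.sum_union, Finset.sum_image, Finset.sum_image]
  · exact fun i _ j _ h => LNode.eminus.inj (Prod.mk.inj h).1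
  · exact fun v _ v' _ h => LNode.base.inj (Prod.mk.inj h).1
  · simp only [Finset.disjoint_left, Finset.mem_image]
    rintro _ ⟨v, -, rfl⟩ ⟨i, -, h⟩
    cases h

lemma sum_B1_B2_lawlerCap_eq_sum_cutEdges (hr : r ∉ C0)
    (hsub : ∀ i ∈ Nets, net i ⊆ insert r C0) (hC : C ⊆ C0) :
    ∑ x ∈ B1 C0 Nets net C, ∑ y ∈ B2 C0 Nets net C, lawlerCap C0 r u Nets net w x y =
      ∑ p ∈ cutEdges C0 r Nets net C, lawlerCap C0 r u Nets net w p.1 p.2 := by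
  rw [← Finset.sum_product']
  refine (Finset.sum_subset cutEdges_subset fun p hp hpE => ?_).symm
  rw [Finset.mem_product] at hp
  exact not_imp_comm.1 (mem_cutEdges_of_lawlerCap_ne_zero hr hsub hC hp.1 hp.2) hpE

lemma lawlerCap_base_t {v : α} (hv : v ∈ C0 \ C) (huC : u ∈ C) :
    lawlerCap C0 r u Nets net w (LNode.base v) LNode.t =
      ENNReal.ofReal (cut C0 r Nets net w C0 * dw Nets net w v) := by
  rw [Finset.mem_sdiff] at hv
  simp [lawlerCap, hv.1, show v ≠ u by rintro rfl; exact hv.2 huC]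

lemma lawlerCap_eminus_eplus {i : ι} (hi : i ∈ Nets) :
    lawlerCap C0 r u Nets net w (LNode.eminus i) (LNode.eplus i) =
      ENNReal.ofReal (dwS Nets net w C0 * w i) := by
  simp [lawlerCap, hi]

lemma sum_B1_B2_lawlerCap (hr : r ∉ C0) (hsub : ∀ i ∈ Nets, net i ⊆ insert r C0)
    (hw : ∀ i ∈ Nets, 0 ≤ w i) (hC : C ⊆ C0) (huC : u ∈ C) :
    ∑ x ∈ B1 C0 Nets net C, ∑ y ∈ B2 C0 Nets net C, lawlerCap C0 r u Nets net w x y =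
      ENNReal.ofReal (cut C0 r Nets net w C0 * dwS Nets net w (C0 \ C) +
        cut C0 r Nets net w C * dwS Nets net w C0) := by
  have hcrossing : ∀ i ∈ crossingNets C0 r Nets net C, i ∈ Nets := fun i hi =>
    (Finset.mem_filter.1 hi).1
  have hbase : ∀ v, 0 ≤ cut C0 r Nets net w C0 * dw Nets net w v := fun v =>
    mul_nonneg (cut_nonneg hw _ _ _) (dw_nonneg hw v)
  have hnet : ∀ i ∈ crossingNets C0 r Nets net C, 0 ≤ dwS Nets net w C0 * w i := fun i hi =>
    mul_nonneg (dwS_nonneg hw _) (hw i (hcrossing i hi))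
  have hreal : cut C0 r Nets net w C0 * dwS Nets net w (C0 \ C) +
      cut C0 r Nets net w C * dwS Nets net w C0 =
        ∑ v ∈ C0 \ C, cut C0 r Nets net w C0 * dw Nets net w v +
          ∑ i ∈ crossingNets C0 r Nets net C, dwS Nets net w C0 * w i := by
    rw [mul_comm (cut C0 r Nets net w C)]
    exact congrArg₂ (· + ·) (Finset.mul_sum _ _ _) (Finset.mul_sum _ _ _)
  rw [sum_B1_B2_lawlerCap_eq_sum_cutEdges hr hsub hC, sum_cutEdges, hreal,
    ENNReal.ofReal_add (Finset.sum_nonneg fun v _ => hbase v) (Finset.sum_nonneg hnet),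
    ENNReal.ofReal_sum_of_nonneg fun v _ => hbase v, ENNReal.ofReal_sum_of_nonneg hnet]
  exact congrArg₂ (· + ·) (Finset.sum_congr rfl fun v hv => lawlerCap_base_t hv huC)
    (Finset.sum_congr rfl fun i hi => lawlerCap_eminus_eplus (hcrossing i hi))

lemma filter_incident_lawlerCap_ne_zero (hr : r ∉ C0)
    (hsub : ∀ i ∈ Nets, net i ⊆ insert r C0) (hw : ∀ i ∈ Nets, 0 < w i) (hC : C ⊆ C0)
    {i : ι} (hi : i ∈ crossingNets C0 r Nets net C) :
    (B1 C0 Nets net C ×ˢ B2 C0 Nets net C).filter (fun p =>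
        (p.1 = LNode.eminus i ∨ p.1 = LNode.eplus i ∨
          p.2 = LNode.eminus i ∨ p.2 = LNode.eplus i) ∧
        lawlerCap C0 r u Nets net w p.1 p.2 ≠ 0) =
      {(LNode.eminus i, LNode.eplus i)} := by
  obtain ⟨hiN, ⟨v, hv⟩, -⟩ := Finset.mem_filter.1 hi
  rw [Finset.mem_inter] at hv
  have hcap : lawlerCap C0 r u Nets net w (LNode.eminus i) (LNode.eplus i) ≠ 0 := by
    rw [lawlerCap_eminus_eplus hiN]
    exact (ENNReal.ofReal_pos.2 (mul_pos (dwS_pos hw hiN hv.1 (hC hv.2)) (hw i hiN))).ne'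
  ext ⟨x, y⟩
  simp only [Finset.mem_filter, Finset.mem_product, Finset.mem_singleton, Prod.mk.injEq]
  constructor
  · rintro ⟨⟨hx, hy⟩, hincident, hxy⟩
    have hxyE := mem_cutEdges_of_lawlerCap_ne_zero hr hsub hC hx hy hxy
    simp only [cutEdges, Finset.mem_union, Finset.mem_image, Prod.mk.injEq] at hxyE
    rcases hxyE with ⟨v, -, rfl, rfl⟩ | ⟨j, -, rfl, rfl⟩
    · simp at hincident
    · simpa using hincident.symm
  · rintro ⟨rfl, rfl⟩
    have hE : (LNode.eminus i, LNode.eplus i) ∈ cutEdges C0 r Nets net C :=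
      Finset.mem_union_right _ (Finset.mem_image_of_mem _ hi)
    exact ⟨Finset.mem_product.1 (cutEdges_subset hE), Or.inl rfl, hcap⟩

end CutWeight

theorem lawler_expansion_cut_weight_general
    (C0 : Finset α) (u r : α) (hr : r ∉ C0)
    (Nets : Finset ι) (net : ι → Finset α) (w : ι → ℝ)
    (hsub : ∀ i ∈ Nets, net i ⊆ insert r C0)
    (hw : ∀ i ∈ Nets, 0 < w i)
    (C : Finset α) (hC : C ⊆ C0) (huC : u ∈ C) :
    (∑ x ∈ B1 C0 Nets net C, ∑ y ∈ B2 C0 Nets net C,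
        lawlerCap C0 r u Nets net w x y) =
      ENNReal.ofReal (cut C0 r Nets net w C0 * dwS Nets net w (C0 \ C) +
        cut C0 r Nets net w C * dwS Nets net w C0) ∧
    (∑ x ∈ B1 C0 Nets net C, ∑ y ∈ B2 C0 Nets net C,
        lawlerCap C0 r u Nets net w x y) ≠ ⊤ ∧
    (∀ i ∈ Nets, (net i ∩ C).Nonempty → (net i ∩ (insert r C0 \ C)).Nonempty →
      ((B1 C0 Nets net C ×ˢ B2 C0 Nets net C).filter (fun p =>
          (p.1 = LNode.eminus i ∨ p.1 = LNode.eplus i ∨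
           p.2 = LNode.eminus i ∨ p.2 = LNode.eplus i) ∧
          lawlerCap C0 r u Nets net w p.1 p.2 ≠ 0)) =
        {((LNode.eminus i : LNode α ι), (LNode.eplus i : LNode α ι))} ∧
      lawlerCap C0 r u Nets net w (LNode.eminus i) (LNode.eplus i) =
        ENNReal.ofReal (dwS Nets net w C0 * w i)) := by
  have hweight := sum_B1_B2_lawlerCap hr hsub (fun i hi => (hw i hi).le) hC huC
  refine ⟨hweight, hweight ▸ ENNReal.ofReal_ne_top, fun i hi hmeetC hleaveC => ?_⟩
  have hcrossing : i ∈ crossingNets C0 r Nets net C := Finset.mem_filter.2 ⟨hi, hmeetC, hleaveC⟩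
  exact ⟨filter_incident_lawlerCap_ne_zero hr hsub hw hC hcrossing, lawlerCap_eminus_eplus hi⟩

/-- For `C ⊆ C0` with `u ∈ C`, the weight of the s-t cut `(B1, B2)` of the
Lawler-expansion flow graph with `B2 = C ∪ {e⁻ : pins(e) ⊆ C} ∪
{e⁺ : pins(e) ∩ C ≠ ∅} ∪ {t}` equals `cut(C0)·d_w(C0∖C) + cut(C)·d_w(C0)`;
in particular it is finite, and for each net `e` crossing `(C, (C0∪{r})∖C)`
exactly one cut edge, namely `(e⁻, e⁺)` of capacity `d_w(C0)·w(e)`, crosses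
from `B1` to `B2` among the net-expansion edges. -/
theorem lawler_expansion_cut_weight
    (C0 : Finset α) (u r : α) (hu : u ∈ C0) (hr : r ∉ C0)
    (Nets : Finset ι) (net : ι → Finset α) (w : ι → ℝ)
    (hsub : ∀ i ∈ Nets, net i ⊆ insert r C0)
    (hcard : ∀ i ∈ Nets, 2 ≤ (net i).card)
    (hw : ∀ i ∈ Nets, 0 < w i)
    (C : Finset α) (hC : C ⊆ C0) (huC : u ∈ C) :
    (∑ x ∈ B1 C0 Nets net C, ∑ y ∈ B2 C0 Nets net C,
        lawlerCap C0 r u Nets net w x y) =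
      ENNReal.ofReal (cut C0 r Nets net w C0 * dwS Nets net w (C0 \ C) +
        cut C0 r Nets net w C * dwS Nets net w C0) ∧
    (∑ x ∈ B1 C0 Nets net C, ∑ y ∈ B2 C0 Nets net C,
        lawlerCap C0 r u Nets net w x y) ≠ ⊤ ∧
    (∀ i ∈ Nets, (net i ∩ C).Nonempty → (net i ∩ (insert r C0 \ C)).Nonempty →
      ((B1 C0 Nets net C ×ˢ B2 C0 Nets net C).filter (fun p =>
          (p.1 = LNode.eminus i ∨ p.1 = LNode.eplus i ∨
           p.2 = LNode.eminus i ∨ p.2 = LNode.eplus i) ∧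
          lawlerCap C0 r u Nets net w p.1 p.2 ≠ 0)) =
        {((LNode.eminus i : LNode α ι), (LNode.eplus i : LNode α ι))} ∧
      lawlerCap C0 r u Nets net w (LNode.eminus i) (LNode.eplus i) =
        ENNReal.ofReal (dwS Nets net w C0 * w i)) :=
  lawler_expansion_cut_weight_general C0 u r hr Nets net w hsub hw C hC huC

end Stmt9
end

section
/- Assume every net in the family has at most 3 elements. Let C ⊆ C0 with u ∈ C, and consider the s-t cut (B1,B2) of the star-expansion flow graph with B2 = C ∪ {a_e : at least half of the pins of e lie in C} ∪ {t} and B1 the complement (the pins of e are the elements of e with r replaced by s). Then the weight of this cut equals cut(C0)·d_w(C0∖C) + cut(C)·d_w(C0); in particular, for each net e crossing (C, (C0∪{r})∖C) exactly one cut edge of capacity d_w(C0)·w(e) crosses from B1 to B2 among the star-expansion edges. -/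
open scoped ENNReal

namespace Stmt10

/-- Nodes of the star-expansion flow graph: the elements of `C0` (via `base`),
an auxiliary node `star i` for each net `i`, a source `s` (with which the
contracted node `r` is identified) and a sink `t`. -/
inductive SNode (α ι : Type*) where
  | base : α → SNode α ι
  | star : ι → SNode α ι
  | s : SNode α ι
  | t : SNode α ι
  deriving DecidableEq

variable {α ι : Type*} [DecidableEq α] [DecidableEq ι]

/-- `cut C` : total weight of the nets containing an element of `C` and an
element of `(C0 ∪ {r}) \ C`. -/
def cut (C0 : Finset α) (r : α) (Nets : Finset ι) (net : ι → Finset α) (w : ι → ℝ)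
    (C : Finset α) : ℝ :=
  ∑ i ∈ Nets.filter
      (fun i => (net i ∩ C).Nonempty ∧ (net i ∩ (insert r C0 \ C)).Nonempty), w i

/-- weighted degree `d_w(v)` : total weight of the nets containing `v`. -/
def dw (Nets : Finset ι) (net : ι → Finset α) (w : ι → ℝ) (v : α) : ℝ :=
  ∑ i ∈ Nets.filter (fun i => v ∈ net i), w i

/-- weighted volume `d_w(C)`. -/
def dwS (Nets : Finset ι) (net : ι → Finset α) (w : ι → ℝ) (C : Finset α) : ℝ :=
  ∑ v ∈ C, dw Nets net w v

/-- Capacities of the star-expansion flow graph (all in-edges of `s` removed). -/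
noncomputable def starCap (C0 : Finset α) (r u : α) (Nets : Finset ι)
    (net : ι → Finset α) (w : ι → ℝ) : SNode α ι → SNode α ι → ℝ≥0∞
  | SNode.base x, SNode.star i =>
      if i ∈ Nets ∧ x ∈ net i ∧ x ∈ C0 then
        ENNReal.ofReal (dwS Nets net w C0 * w i) else 0
  | SNode.star i, SNode.base x =>
      if i ∈ Nets ∧ x ∈ net i ∧ x ∈ C0 then
        ENNReal.ofReal (dwS Nets net w C0 * w i) else 0
  | SNode.s, SNode.star i =>
      if i ∈ Nets ∧ r ∈ net i then
        ENNReal.ofReal (dwS Nets net w C0 * w i) else 0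
  | SNode.base v, SNode.t =>
      if v ∈ C0 then
        (if v = u then ⊤
         else ENNReal.ofReal (cut C0 r Nets net w C0 * dw Nets net w v))
      else 0
  | _, _ => 0

/-- The node set of the star-expansion flow graph: `C0 ∪ {s, t} ∪ {a_e : e ∈ 𝓔}`. -/
def nodeSet (C0 : Finset α) (Nets : Finset ι) : Finset (SNode α ι) :=
  C0.image SNode.base ∪ Nets.image SNode.star ∪ {SNode.s, SNode.t}

/-- The block `B2` of the cut considered:
`B2 = C ∪ {a_e : at least half of the pins of e lie in C} ∪ {t}`. -/
def B2 (Nets : Finset ι) (net : ι → Finset α) (C : Finset α) :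
    Finset (SNode α ι) :=
  C.image SNode.base ∪
    (Nets.filter (fun i => (net i).card ≤ 2 * (net i ∩ C).card)).image SNode.star ∪
    {SNode.t}

/-- The block `B1` is the complement of `B2` in the node set. -/
def B1 (C0 : Finset α) (Nets : Finset ι) (net : ι → Finset α) (C : Finset α) :
    Finset (SNode α ι) :=
  nodeSet C0 Nets \ B2 Nets net C


section Aux
variable {C0 : Finset α} {Nets : Finset ι} {net : ι → Finset α} {C : Finset α}

@[simp] lemma base_mem_B2 {v : α} : SNode.base v ∈ B2 Nets net C ↔ v ∈ C := by
  simp [B2]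

@[simp] lemma star_mem_B2 {i : ι} :
    SNode.star i ∈ B2 Nets net C ↔ i ∈ Nets ∧ (net i).card ≤ 2 * (net i ∩ C).card := by
  simp [B2]

@[simp] lemma t_mem_B2 : (SNode.t : SNode α ι) ∈ B2 Nets net C := by simp [B2]

@[simp] lemma s_mem_B2 : (SNode.s : SNode α ι) ∉ B2 Nets net C := by simp [B2]

@[simp] lemma base_mem_B1 {v : α} :
    SNode.base v ∈ B1 C0 Nets net C ↔ v ∈ C0 ∧ v ∉ C := by
  simp [B1, B2, nodeSet]

@[simp] lemma star_mem_B1 {i : ι} :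
    SNode.star i ∈ B1 C0 Nets net C ↔ i ∈ Nets ∧ ¬ (net i).card ≤ 2 * (net i ∩ C).card := by
  simp [B1, B2, nodeSet]; tauto

@[simp] lemma s_mem_B1 : (SNode.s : SNode α ι) ∈ B1 C0 Nets net C := by
  simp [B1, B2, nodeSet]

@[simp] lemma t_mem_B1 : (SNode.t : SNode α ι) ∉ B1 C0 Nets net C := by
  simp [B1, B2, nodeSet]

lemma B1_eq :
    B1 C0 Nets net C = (C0 \ C).image SNode.base ∪
      (Nets.filter (fun i => ¬ (net i).card ≤ 2 * (net i ∩ C).card)).image SNode.star ∪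
      {SNode.s} := by
  ext x
  cases x <;> simp [B1, B2, nodeSet] <;> tauto

lemma sum_B2 (f : SNode α ι → ℝ≥0∞) :
    ∑ y ∈ B2 Nets net C, f y =
      (∑ v ∈ C, f (SNode.base v)) +
      (∑ i ∈ Nets.filter (fun i => (net i).card ≤ 2 * (net i ∩ C).card), f (SNode.star i)) +
      f SNode.t := by
  rw [B2, Finset.sum_union (by simp [Finset.disjoint_left]; try aesop),
    Finset.sum_union (by simp [Finset.disjoint_left]; try aesop),
    Finset.sum_image (by intro a _ b _ h; simpa using h),
    Finset.sum_image (by intro a _ b _ h; simpa using h), Finset.sum_singleton]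

lemma sum_B1 (f : SNode α ι → ℝ≥0∞) :
    ∑ x ∈ B1 C0 Nets net C, f x =
      (∑ v ∈ C0 \ C, f (SNode.base v)) +
      (∑ i ∈ Nets.filter (fun i => ¬ (net i).card ≤ 2 * (net i ∩ C).card), f (SNode.star i)) +
      f SNode.s := by
  rw [B1_eq, Finset.sum_union (by simp [Finset.disjoint_left]; try aesop),
    Finset.sum_union (by simp [Finset.disjoint_left]; try aesop),
    Finset.sum_image (by intro a _ b _ h; simpa using h),
    Finset.sum_image (by intro a _ b _ h; simpa using h), Finset.sum_singleton]

variable {r u : α} {w : ι → ℝ}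

@[simp] lemma starCap_base_star {x : α} {i : ι} :
    starCap C0 r u Nets net w (SNode.base x) (SNode.star i) =
      if i ∈ Nets ∧ x ∈ net i ∧ x ∈ C0 then
        ENNReal.ofReal (dwS Nets net w C0 * w i) else 0 := rfl

@[simp] lemma starCap_star_base {x : α} {i : ι} :
    starCap C0 r u Nets net w (SNode.star i) (SNode.base x) =
      if i ∈ Nets ∧ x ∈ net i ∧ x ∈ C0 then
        ENNReal.ofReal (dwS Nets net w C0 * w i) else 0 := rfl

@[simp] lemma starCap_s_star {i : ι} :
    starCap C0 r u Nets net w SNode.s (SNode.star i) =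
      if i ∈ Nets ∧ r ∈ net i then
        ENNReal.ofReal (dwS Nets net w C0 * w i) else 0 := rfl

@[simp] lemma starCap_base_t {v : α} :
    starCap C0 r u Nets net w (SNode.base v) SNode.t =
      if v ∈ C0 then
        (if v = u then ⊤
         else ENNReal.ofReal (cut C0 r Nets net w C0 * dw Nets net w v))
      else 0 := rfl

@[simp] lemma starCap_base_base {x y : α} :
    starCap C0 r u Nets net w (SNode.base x) (SNode.base y) = 0 := rfl
@[simp] lemma starCap_star_star {i j : ι} :
    starCap C0 r u Nets net w (SNode.star i) (SNode.star j) = 0 := rfl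
@[simp] lemma starCap_star_t {i : ι} :
    starCap C0 r u Nets net w (SNode.star i) SNode.t = 0 := rfl
@[simp] lemma starCap_star_s {i : ι} :
    starCap C0 r u Nets net w (SNode.star i) SNode.s = 0 := rfl
@[simp] lemma starCap_s_base {x : α} :
    starCap C0 r u Nets net w SNode.s (SNode.base x) = 0 := rfl
@[simp] lemma starCap_s_t :
    starCap C0 r u Nets net w SNode.s SNode.t = (0 : ℝ≥0∞) := rfl
@[simp] lemma starCap_t {y : SNode α ι} :
    starCap C0 r u Nets net w SNode.t y = 0 := by cases y <;> rfl
@[simp] lemma starCap_base_s {x : α} :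
    starCap C0 r u Nets net w (SNode.base x) SNode.s = 0 := rfl
@[simp] lemma starCap_s_s :
    starCap C0 r u Nets net w SNode.s SNode.s = (0 : ℝ≥0∞) := rfl

end Aux



/-- For `C ⊆ C0` with `u ∈ C` and all nets of size at most 3, the weight of the
s-t cut `(B1, B2)` of the star-expansion flow graph with
`B2 = C ∪ {a_e : at least half of the pins of e lie in C} ∪ {t}` equals
`cut(C0)·d_w(C0∖C) + cut(C)·d_w(C0)`; in particular, for each net `e` crossing
`(C, (C0∪{r})∖C)`, exactly one cut edge of capacity `d_w(C0)·w(e)` crosses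
from `B1` to `B2` among the star-expansion edges. -/
theorem star_expansion_cut_weight
    (C0 : Finset α) (u r : α) (hu : u ∈ C0) (hr : r ∉ C0)
    (Nets : Finset ι) (net : ι → Finset α) (w : ι → ℝ)
    (hsub : ∀ i ∈ Nets, net i ⊆ insert r C0)
    (hcard : ∀ i ∈ Nets, 2 ≤ (net i).card)
    (hsize : ∀ i ∈ Nets, (net i).card ≤ 3)
    (hw : ∀ i ∈ Nets, 0 < w i)
    (C : Finset α) (hC : C ⊆ C0) (huC : u ∈ C) :
    (∑ x ∈ B1 C0 Nets net C, ∑ y ∈ B2 Nets net C,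
        starCap C0 r u Nets net w x y) =
      ENNReal.ofReal (cut C0 r Nets net w C0 * dwS Nets net w (C0 \ C) +
        cut C0 r Nets net w C * dwS Nets net w C0) ∧
    (∀ i ∈ Nets, (net i ∩ C).Nonempty → (net i ∩ (insert r C0 \ C)).Nonempty →
      ((B1 C0 Nets net C ×ˢ B2 Nets net C).filter (fun p =>
          (p.1 = SNode.star i ∨ p.2 = SNode.star i) ∧
          starCap C0 r u Nets net w p.1 p.2 ≠ 0)).card = 1 ∧
      (∀ p ∈ (B1 C0 Nets net C ×ˢ B2 Nets net C).filter (fun p =>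
          (p.1 = SNode.star i ∨ p.2 = SNode.star i) ∧
          starCap C0 r u Nets net w p.1 p.2 ≠ 0),
        starCap C0 r u Nets net w p.1 p.2 =
          ENNReal.ofReal (dwS Nets net w C0 * w i))) := by
  classical
  set K : ι → ℝ≥0∞ := fun i => ENNReal.ofReal (dwS Nets net w C0 * w i) with hKdef
  have hwnn : ∀ i ∈ Nets, 0 ≤ w i := fun i hi => (hw i hi).le
  have hdwnn : ∀ v, 0 ≤ dw Nets net w v := fun v =>
    Finset.sum_nonneg fun i hi => hwnn i (Finset.mem_filter.mp hi).1
  have hdwSnn : ∀ S : Finset α, 0 ≤ dwS Nets net w S := fun S =>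
    Finset.sum_nonneg fun v _ => hdwnn v
  have hcutnn : ∀ S : Finset α, 0 ≤ cut C0 r Nets net w S := fun S =>
    Finset.sum_nonneg fun i hi => hwnn i (Finset.mem_filter.mp hi).1
  have hrC : r ∉ C := fun h => hr (hC h)
  have hdiff : ∀ i ∈ Nets, net i ∩ (insert r C0 \ C) = net i \ C := by
    intro i hi; ext a
    simp only [Finset.mem_inter, Finset.mem_sdiff, Finset.mem_insert]
    constructor
    · rintro ⟨h1, _, h3⟩; exact ⟨h1, h3⟩
    · rintro ⟨h1, h2⟩
      exact ⟨h1, by simpa using hsub i hi h1, h2⟩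
  have hKpos : ∀ i ∈ Nets, (net i ∩ C).Nonempty → 0 < dwS Nets net w C0 * w i := by
    rintro i hi ⟨v, hv⟩
    rw [Finset.mem_inter] at hv
    have hv0 : v ∈ C0 := hC hv.2
    have h1 : w i ≤ dw Nets net w v := by
      refine Finset.single_le_sum (f := w)
        (fun j hj => hwnn j (Finset.mem_filter.mp hj).1) ?_
      exact Finset.mem_filter.mpr ⟨hi, hv.1⟩
    have h2 : dw Nets net w v ≤ dwS Nets net w C0 :=
      Finset.single_le_sum (fun x _ => hdwnn x) hv0
    have h3 := hw i hi
    nlinarith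
  have hKne : ∀ i ∈ Nets, (net i ∩ C).Nonempty → K i ≠ 0 := fun i hi hne =>
    (ENNReal.ofReal_pos.mpr (hKpos i hi hne)).ne'
  have hsplit : ∀ i : ι, (net i ∩ C).card + (net i \ C).card = (net i).card :=
    fun i => Finset.card_inter_add_card_sdiff _ _
  have hcount : ∀ i ∈ Nets,
      (if (net i).card ≤ 2 * (net i ∩ C).card then (net i \ C).card
        else (net i ∩ C).card)
        = (if ((net i ∩ C).Nonempty ∧ (net i ∩ (insert r C0 \ C)).Nonempty)
            then 1 else 0) := by
    intro i hi
    rw [hdiff i hi]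
    have h1 := hsplit i
    have h2 := hcard i hi
    have h3 := hsize i hi
    simp only [← Finset.card_pos]
    split_ifs <;> omega
  constructor
  · -- the weight of the cut
    have hsum_base_star : ∀ i ∈ Nets, ∀ S : Finset α, S ⊆ C0 →
        (∑ v ∈ S, starCap C0 r u Nets net w (SNode.base v) (SNode.star i)) =
          (S ∩ net i).card • K i := by
      intro i hi S hS
      have h : ∀ v ∈ S, starCap C0 r u Nets net w (SNode.base v) (SNode.star i)
          = if v ∈ net i then K i else 0 := by
        intro v hv
        by_cases h : v ∈ net i <;> simp [hi, hS hv, h, hKdef]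
      rw [Finset.sum_congr rfl h, Finset.sum_ite_mem, Finset.sum_const]
    have hsum_star_base : ∀ i ∈ Nets,
        (∑ v ∈ C, starCap C0 r u Nets net w (SNode.star i) (SNode.base v)) =
          (net i ∩ C).card • K i := by
      intro i hi
      have h : ∀ v ∈ C, starCap C0 r u Nets net w (SNode.star i) (SNode.base v)
          = if v ∈ net i then K i else 0 := by
        intro v hv
        by_cases h : v ∈ net i <;> simp [hi, hC hv, h, hKdef]
      rw [Finset.sum_congr rfl h, Finset.sum_ite_mem, Finset.sum_const,
        Finset.inter_comm]
    have hm : ∀ i ∈ Nets,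
        ((C0 \ C) ∩ net i).card + (if r ∈ net i then 1 else 0)
          = (net i \ C).card := by
      intro i hi
      have hset : net i \ C = ((C0 \ C) ∩ net i) ∪ (net i ∩ {r}) := by
        ext a
        simp only [Finset.mem_sdiff, Finset.mem_inter, Finset.mem_union,
          Finset.mem_singleton]
        constructor
        · rintro ⟨h1, h2⟩
          rcases Finset.mem_insert.mp (hsub i hi h1) with rfl | hC0
          · exact Or.inr ⟨h1, rfl⟩
          · exact Or.inl ⟨⟨hC0, h2⟩, h1⟩
        · rintro (⟨⟨_, h2⟩, h1⟩ | ⟨h1, rfl⟩)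
          · exact ⟨h1, h2⟩
          · exact ⟨h1, hrC⟩
      rw [hset, Finset.card_union_of_disjoint]
      · congr 1
        by_cases h : r ∈ net i <;> simp [Finset.inter_singleton_of_mem,
          Finset.inter_singleton_of_notMem, h]
      · simp only [Finset.disjoint_left, Finset.mem_inter, Finset.mem_sdiff,
          Finset.mem_singleton]
        rintro a ⟨⟨ha, _⟩, _⟩ ⟨_, rfl⟩
        exact hr ha
    rw [sum_B1]
    simp only [sum_B2, starCap_base_base, starCap_star_star, starCap_star_t,
      starCap_s_base, starCap_s_t, Finset.sum_const_zero, zero_add, add_zero]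
    rw [Finset.sum_add_distrib, Finset.sum_comm]
    have e1 : ∑ i ∈ Nets.filter (fun i => (net i).card ≤ 2 * (net i ∩ C).card),
        ∑ x ∈ C0 \ C, starCap C0 r u Nets net w (SNode.base x) (SNode.star i)
        = ∑ i ∈ Nets.filter (fun i => (net i).card ≤ 2 * (net i ∩ C).card),
            ((C0 \ C) ∩ net i).card • K i :=
      Finset.sum_congr rfl fun i hi =>
        hsum_base_star i (Finset.mem_filter.mp hi).1 _ Finset.sdiff_subset
    have e2 : ∑ x ∈ C0 \ C, starCap C0 r u Nets net w (SNode.base x) SNode.t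
        = ENNReal.ofReal (cut C0 r Nets net w C0 * dwS Nets net w (C0 \ C)) := by
      rw [dwS, Finset.mul_sum,
        ENNReal.ofReal_sum_of_nonneg (fun v _ => mul_nonneg (hcutnn C0) (hdwnn v))]
      refine Finset.sum_congr rfl fun v hv => ?_
      rw [Finset.mem_sdiff] at hv
      have hvu : v ≠ u := fun h => hv.2 (h ▸ huC)
      simp [hv.1, hvu]
    have e3 : ∑ i ∈ Nets.filter (fun i => ¬(net i).card ≤ 2 * (net i ∩ C).card),
        ∑ v ∈ C, starCap C0 r u Nets net w (SNode.star i) (SNode.base v)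
        = ∑ i ∈ Nets.filter (fun i => ¬(net i).card ≤ 2 * (net i ∩ C).card),
            (net i ∩ C).card • K i :=
      Finset.sum_congr rfl fun i hi => hsum_star_base i (Finset.mem_filter.mp hi).1
    rw [e1, e2, e3]
    have hcapS : ∀ i ∈ Nets.filter (fun i => (net i).card ≤ 2 * (net i ∩ C).card),
        starCap C0 r u Nets net w SNode.s (SNode.star i)
          = (if r ∈ net i then 1 else 0) • K i := by
      intro i hi
      have hi' := (Finset.mem_filter.mp hi).1
      by_cases h : r ∈ net i <;> simp [hi', h, hKdef]
    have estar :
        (∑ i ∈ Nets.filter (fun i => (net i).card ≤ 2 * (net i ∩ C).card),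
            ((C0 \ C) ∩ net i).card • K i)
        + (∑ i ∈ Nets.filter (fun i => ¬(net i).card ≤ 2 * (net i ∩ C).card),
            (net i ∩ C).card • K i)
        + (∑ i ∈ Nets.filter (fun i => (net i).card ≤ 2 * (net i ∩ C).card),
            starCap C0 r u Nets net w SNode.s (SNode.star i))
        = ENNReal.ofReal (cut C0 r Nets net w C * dwS Nets net w C0) := by
      rw [Finset.sum_congr rfl hcapS, add_right_comm, ← Finset.sum_add_distrib]
      have comb : ∀ i ∈ Nets.filter (fun i => (net i).card ≤ 2 * (net i ∩ C).card),
          ((C0 \ C) ∩ net i).card • K i + (if r ∈ net i then 1 else 0) • K i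
            = (net i \ C).card • K i := by
        intro i hi
        rw [← add_nsmul, hm i (Finset.mem_filter.mp hi).1]
      rw [Finset.sum_congr rfl comb]
      have hFG : (∑ i ∈ Nets.filter (fun i => (net i).card ≤ 2 * (net i ∩ C).card),
            (net i \ C).card • K i)
          + (∑ i ∈ Nets.filter (fun i => ¬(net i).card ≤ 2 * (net i ∩ C).card),
            (net i ∩ C).card • K i)
          = ∑ i ∈ Nets, (if (net i).card ≤ 2 * (net i ∩ C).card
              then (net i \ C).card else (net i ∩ C).card) • K i := by
        rw [← Finset.sum_filter_add_sum_filter_not Nets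
          (fun i => (net i).card ≤ 2 * (net i ∩ C).card)]
        congr 1
        · exact Finset.sum_congr rfl fun i hi => by
            rw [if_pos (Finset.mem_filter.mp hi).2]
        · exact Finset.sum_congr rfl fun i hi => by
            rw [if_neg (Finset.mem_filter.mp hi).2]
      rw [hFG]
      have hcross : ∀ i ∈ Nets,
          (if (net i).card ≤ 2 * (net i ∩ C).card
            then (net i \ C).card else (net i ∩ C).card) • K i
          = if ((net i ∩ C).Nonempty ∧ (net i ∩ (insert r C0 \ C)).Nonempty)
              then K i else 0 := by
        intro i hi
        rw [hcount i hi]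
        split_ifs <;> simp
      rw [Finset.sum_congr rfl hcross, ← Finset.sum_filter]
      simp only [hKdef]
      rw [← ENNReal.ofReal_sum_of_nonneg
        (fun i hi => mul_nonneg (hdwSnn C0) (hwnn i (Finset.mem_filter.mp hi).1))]
      congr 1
      rw [cut, Finset.sum_mul]
      exact Finset.sum_congr rfl fun i _ => mul_comm _ _
    rw [ENNReal.ofReal_add (mul_nonneg (hcutnn C0) (hdwSnn _))
      (mul_nonneg (hcutnn C) (hdwSnn _)), ← estar]
    ring
  · intro i hi h1 h2
    have h2' : (net i \ C).Nonempty := by rw [← hdiff i hi]; exact h2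
    have hKnei' : ENNReal.ofReal (dwS Nets net w C0 * w i) ≠ 0 := hKne i hi h1
    have hone : (if (net i).card ≤ 2 * (net i ∩ C).card then (net i \ C).card
        else (net i ∩ C).card) = 1 := by
      rw [hcount i hi]
      exact if_pos ⟨h1, h2⟩
    by_cases hcond : (net i).card ≤ 2 * (net i ∩ C).card
    · rw [if_pos hcond] at hone
      obtain ⟨a, ha⟩ := Finset.card_eq_one.mp hone
      have haa : a ∈ net i ∧ a ∉ C :=
        Finset.mem_sdiff.mp (ha ▸ Finset.mem_singleton_self a)
      have hset : (B1 C0 Nets net C ×ˢ B2 Nets net C).filter (fun p =>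
          (p.1 = SNode.star i ∨ p.2 = SNode.star i) ∧
          starCap C0 r u Nets net w p.1 p.2 ≠ 0)
          = {((if a = r then SNode.s else SNode.base a : SNode α ι),
              SNode.star i)} := by
        apply Finset.eq_singleton_iff_unique_mem.mpr
        constructor
        · simp only [Finset.mem_filter, Finset.mem_product]
          by_cases har : a = r
          · subst har
            rw [if_pos rfl]
            exact ⟨⟨s_mem_B1, star_mem_B2.mpr ⟨hi, hcond⟩⟩, Or.inr trivial, by
              rw [starCap_s_star, if_pos ⟨hi, haa.1⟩]; exact hKnei'⟩
          · have haC0 : a ∈ C0 := by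
              rcases Finset.mem_insert.mp (hsub i hi haa.1) with h | h
              · exact absurd h har
              · exact h
            rw [if_neg har]
            exact ⟨⟨base_mem_B1.mpr ⟨haC0, haa.2⟩, star_mem_B2.mpr ⟨hi, hcond⟩⟩,
              Or.inr trivial, by
                rw [starCap_base_star, if_pos ⟨hi, haa.1, haC0⟩]; exact hKnei'⟩
        · rintro ⟨x, y⟩ hp
          simp only [Finset.mem_filter, Finset.mem_product] at hp
          obtain ⟨⟨hx, hy⟩, hor, hcap⟩ := hp
          have hxne : x ≠ SNode.star i := by
            rintro rfl
            exact (star_mem_B1.mp hx).2 hcond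
          have hy' : y = SNode.star i := hor.resolve_left hxne
          subst hy'
          rcases x with v | j | _ | _
          · rw [starCap_base_star] at hcap
            have hcond2 : i ∈ Nets ∧ v ∈ net i ∧ v ∈ C0 := by
              by_contra h; rw [if_neg h] at hcap; exact hcap rfl
            have hvC : v ∉ C := (base_mem_B1.mp hx).2
            have hva : v = a := Finset.mem_singleton.mp
              (by rw [← ha]; exact Finset.mem_sdiff.mpr ⟨hcond2.2.1, hvC⟩)
            subst hva
            have hvr : ¬ v = r := fun h => hr (h ▸ hcond2.2.2)
            rw [if_neg hvr]
          · simp at hcap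
          · have har : a = r := (Finset.mem_singleton.mp (by
              rw [← ha]
              refine Finset.mem_sdiff.mpr ⟨?_, hrC⟩
              rw [starCap_s_star] at hcap
              by_contra h
              rw [if_neg (fun hh => h hh.2)] at hcap
              exact hcap rfl)).symm
            rw [if_pos har]
          · exact absurd hx t_mem_B1
      refine ⟨by rw [hset]; rfl, ?_⟩
      intro p hp
      rw [hset, Finset.mem_singleton] at hp
      subst hp
      by_cases har : a = r
      · rw [if_pos har]
        rw [starCap_s_star, if_pos ⟨hi, har ▸ haa.1⟩]
      · have haC0 : a ∈ C0 := by
          rcases Finset.mem_insert.mp (hsub i hi haa.1) with h | h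
          · exact absurd h har
          · exact h
        rw [if_neg har]
        rw [starCap_base_star, if_pos ⟨hi, haa.1, haC0⟩]
    · rw [if_neg hcond] at hone
      obtain ⟨a, ha⟩ := Finset.card_eq_one.mp hone
      have haa : a ∈ net i ∧ a ∈ C :=
        Finset.mem_inter.mp (ha ▸ Finset.mem_singleton_self a)
      have haC0 : a ∈ C0 := hC haa.2
      have hset : (B1 C0 Nets net C ×ˢ B2 Nets net C).filter (fun p =>
          (p.1 = SNode.star i ∨ p.2 = SNode.star i) ∧
          starCap C0 r u Nets net w p.1 p.2 ≠ 0)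
          = {((SNode.star i : SNode α ι), SNode.base a)} := by
        apply Finset.eq_singleton_iff_unique_mem.mpr
        constructor
        · simp only [Finset.mem_filter, Finset.mem_product]
          exact ⟨⟨star_mem_B1.mpr ⟨hi, hcond⟩, base_mem_B2.mpr haa.2⟩,
            Or.inl trivial, by
              rw [starCap_star_base, if_pos ⟨hi, haa.1, haC0⟩]; exact hKnei'⟩
        · rintro ⟨x, y⟩ hp
          simp only [Finset.mem_filter, Finset.mem_product] at hp
          obtain ⟨⟨hx, hy⟩, hor, hcap⟩ := hp
          have hyne : y ≠ SNode.star i := by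
            rintro rfl
            exact hcond (star_mem_B2.mp hy).2
          have hx' : x = SNode.star i := hor.resolve_right hyne
          subst hx'
          rcases y with v | j | _ | _
          · rw [starCap_star_base] at hcap
            have hcond2 : i ∈ Nets ∧ v ∈ net i ∧ v ∈ C0 := by
              by_contra h; rw [if_neg h] at hcap; exact hcap rfl
            have hvC : v ∈ C := base_mem_B2.mp hy
            have hva : v = a := Finset.mem_singleton.mp
              (by rw [← ha]; exact Finset.mem_inter.mpr ⟨hcond2.2.1, hvC⟩)
            subst hva
            rfl
          · simp at hcap
          · exact absurd hy s_mem_B2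
          · simp at hcap
      refine ⟨by rw [hset]; rfl, ?_⟩
      intro p hp
      rw [hset, Finset.mem_singleton] at hp
      subst hp
      rw [starCap_star_base, if_pos ⟨hi, haa.1, haC0⟩]


end Stmt10
end
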